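/- arXiv:math/0702551 — 6 statements merged into one kernel-verified Lean document; each statement's English description precedes it below -/
import Mathlib

section
/- Let $F_n$ ($n \ge 1$) and $F$ be closed subsets of $\mathbb{R}^d$, and let $\mathcal{K}_1$ be a family of compact subsets of $\mathbb{R}^d$ such that: (1) $\bigcup_{K \in \mathcal{K}_1} K = \mathbb{R}^d$; (2) for every $\delta > 0$ and every compact $K$, the closure $\overline{K^{\delta}}$ of the $\delta$-swelling of $K$ belongs to $\mathcal{K}_1$; (3) for every $K \in \mathcal{K}_1$, the sets $F_n \cap K$ converge to $F \cap K$ in the sense that (PK1) and (PK2) hold for them. Then (PK1) and (PK2) hold for $F_n$ and $F$, i.e. $F_n \to F$ in the Fell topology. -/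
/-! Both criteria are local: (PK1) at `y` only involves a set `K ∋ y`, and (PK2) at `ylim` only
involves a tail of the sequence, which eventually lies in any neighbourhood `K` of `ylim`. The
closed `1`-swelling of `{y}` is such a neighbourhood. -/

open Filter Set Metric

/-- Painlevé–Kuratowski convergence criteria for a sequence of closed sets `A n`
converging to a closed set `Alim`:
(PK1) every point of `Alim` is the limit of points `y n ∈ A n` (for all large `n`);
(PK2) for every subsequence and points `y k ∈ A (φ k)` converging in the space,
the limit belongs to `Alim`. -/
def PKConv {E : Type*} [MetricSpace E] (A : ℕ → Set E) (Alim : Set E) : Prop :=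
  (∀ y ∈ Alim, ∃ yseq : ℕ → E,
      (∀ᶠ n in atTop, yseq n ∈ A n) ∧ Tendsto yseq atTop (nhds y)) ∧
  (∀ φ : ℕ → ℕ, StrictMono φ → ∀ (yseq : ℕ → E) (ylim : E),
      (∀ j, yseq j ∈ A (φ j)) → Tendsto yseq atTop (nhds ylim) → ylim ∈ Alim)

open Topology

namespace PKConv

variable {E : Type*} [MetricSpace E] {A : ℕ → Set E} {Alim K : Set E}

theorem exists_tendsto_of_inter (h : PKConv (fun n => A n ∩ K) (Alim ∩ K)) {y : E}
    (hy : y ∈ Alim) (hyK : y ∈ K) :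
    ∃ yseq : ℕ → E, (∀ᶠ n in atTop, yseq n ∈ A n) ∧ Tendsto yseq atTop (𝓝 y) := by
  obtain ⟨yseq, hmem, hlim⟩ := h.1 y ⟨hy, hyK⟩
  exact ⟨yseq, hmem.mono fun _ hn => hn.1, hlim⟩

theorem mem_of_inter_of_mem_nhds (h : PKConv (fun n => A n ∩ K) (Alim ∩ K)) {φ : ℕ → ℕ}
    (hφ : StrictMono φ) {yseq : ℕ → E} {ylim : E} (hK : K ∈ 𝓝 ylim)
    (hmem : ∀ j, yseq j ∈ A (φ j)) (hlim : Tendsto yseq atTop (𝓝 ylim)) : ylim ∈ Alim := by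
  obtain ⟨N, hN⟩ := eventually_atTop.mp (hlim hK)
  have hshift : StrictMono fun j => φ (j + N) := hφ.comp (strictMono_id.add_const N)
  exact (h.2 _ hshift (fun j => yseq (j + N)) ylim
    (fun j => ⟨hmem _, hN _ (Nat.le_add_left N j)⟩)
    (hlim.comp (tendsto_add_atTop_nat N))).1

theorem of_forall_nhds (h : ∀ y, ∃ K ∈ 𝓝 y, PKConv (fun n => A n ∩ K) (Alim ∩ K)) :
    PKConv A Alim := by
  refine ⟨fun y hy => ?_, fun φ hφ yseq ylim hmem hlim => ?_⟩
  · obtain ⟨K, hK, hconv⟩ := h y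
    exact hconv.exists_tendsto_of_inter hy (mem_of_mem_nhds hK)
  · obtain ⟨K, hK, hconv⟩ := h ylim
    exact hconv.mem_of_inter_of_mem_nhds hφ hK hmem hlim

end PKConv

theorem closure_thickening_singleton_mem_nhds {E : Type*} [PseudoMetricSpace E] {δ : ℝ}
    (hδ : 0 < δ) (y : E) : closure (thickening δ {y}) ∈ 𝓝 y := by
  rw [thickening_singleton]
  exact mem_of_superset (ball_mem_nhds y hδ) subset_closure

theorem PKConv_of_PKConv_inter_compacts_general {d : ℕ}
    (F : ℕ → Set (EuclideanSpace ℝ (Fin d))) (Flim : Set (EuclideanSpace ℝ (Fin d)))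
    (K1 : Set (Set (EuclideanSpace ℝ (Fin d))))
    (hswell : ∀ δ > (0:ℝ), ∀ K : Set (EuclideanSpace ℝ (Fin d)), IsCompact K →
      closure (Metric.thickening δ K) ∈ K1)
    (hconv : ∀ K ∈ K1, PKConv (fun n => F n ∩ K) (Flim ∩ K)) :
    PKConv F Flim :=
  PKConv.of_forall_nhds fun y =>
    ⟨_, closure_thickening_singleton_mem_nhds one_pos y,
      hconv _ (hswell 1 one_pos {y} isCompact_singleton)⟩

/-- If `K1` is a family of compact subsets of `ℝ^d` covering the whole space,
closed under taking closures of `δ`-swellings of arbitrary compact sets, and if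
`F n ∩ K → Flim ∩ K` in the Painlevé–Kuratowski sense for every `K ∈ K1`, then
`F n → Flim` in the Painlevé–Kuratowski sense (i.e. in the Fell topology). -/
theorem PKConv_of_PKConv_inter_compacts {d : ℕ}
    (F : ℕ → Set (EuclideanSpace ℝ (Fin d))) (Flim : Set (EuclideanSpace ℝ (Fin d)))
    (hF : ∀ n, IsClosed (F n)) (hFlim : IsClosed Flim)
    (K1 : Set (Set (EuclideanSpace ℝ (Fin d))))
    (hK1comp : ∀ K ∈ K1, IsCompact K)
    (hcover : ⋃ K ∈ K1, K = univ)
    (hswell : ∀ δ > (0:ℝ), ∀ K : Set (EuclideanSpace ℝ (Fin d)), IsCompact K →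
      closure (Metric.thickening δ K) ∈ K1)
    (hconv : ∀ K ∈ K1, PKConv (fun n => F n ∩ K) (Flim ∩ K)) :
    PKConv F Flim :=
  PKConv_of_PKConv_inter_compacts_general F Flim K1 hswell hconv
end

section
/- Let $x : (0,1] \to [0,\infty)$ be continuous, strictly decreasing, with $\lim_{\epsilon \downarrow 0} x(\epsilon) = \infty$. Let $y_n : (0,1] \to \mathbb{R}$ be left continuous with finite right-hand limits, let $y : (0,1] \to \mathbb{R}$ be continuous, and suppose $y_n \to y$ uniformly on every compact subinterval of $(0,1]$ bounded away from $0$. Let $k = k(n) \to \infty$. Then the sets $F_n := \{(x(j/k), y_n(j/k)) : 1 \le j \le k\}$ converge to $F := \{(x(t), y(t)) : 0 < t \le 1\}$ in the sense that the Painlevé–Kuratowski criteria (PK1) and (PK2) hold. -/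
open Filter Set Metric

private lemma aux_tendsto_y
    (y : ℕ → ℝ → ℝ) (ylim : ℝ → ℝ)
    (hylim_cont : ContinuousOn ylim (Ioc 0 1))
    {a : ℝ} (ha : a ∈ Ioc (0:ℝ) 1)
    (hunif : TendstoUniformlyOn (fun n => y n) ylim atTop (Icc a 1))
    (ν : ℕ → ℕ) (hν : Tendsto ν atTop atTop)
    (s : ℕ → ℝ) (hs : ∀ᶠ j in atTop, s j ∈ Icc a 1)
    (t₀ : ℝ) (ht₀ : t₀ ∈ Icc a 1)
    (hst : Tendsto s atTop (nhds t₀)) :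
    Tendsto (fun j => y (ν j) (s j)) atTop (nhds (ylim t₀)) := by
  have ht₀' : t₀ ∈ Ioc (0:ℝ) 1 := ⟨lt_of_lt_of_le ha.1 ht₀.1, ht₀.2⟩
  have hsub : Icc a 1 ⊆ Ioc (0:ℝ) 1 := fun u hu => ⟨lt_of_lt_of_le ha.1 hu.1, hu.2⟩
  have h1 : Tendsto (fun j => ylim (s j)) atTop (nhds (ylim t₀)) := by
    apply ((hylim_cont t₀ ht₀').tendsto).comp
    rw [tendsto_nhdsWithin_iff]
    exact ⟨hst, hs.mono fun j hj => hsub hj⟩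
  rw [Metric.tendsto_nhds]
  intro ε hε
  have h2 : ∀ᶠ j in atTop, dist (ylim (s j)) (ylim t₀) < ε/2 :=
    Metric.tendsto_nhds.mp h1 (ε/2) (half_pos hε)
  have h3 : ∀ᶠ n in atTop, ∀ u ∈ Icc a 1, dist (ylim u) (y n u) < ε/2 :=
    Metric.tendstoUniformlyOn_iff.mp hunif (ε/2) (half_pos hε)
  have h4 : ∀ᶠ j in atTop, ∀ u ∈ Icc a 1, dist (ylim u) (y (ν j) u) < ε/2 :=
    hν.eventually h3
  filter_upwards [h2, h4, hs] with j hj2 hj4 hjs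
  have hd : dist (y (ν j) (s j)) (ylim (s j)) < ε/2 := by
    rw [dist_comm]; exact hj4 (s j) hjs
  calc dist (y (ν j) (s j)) (ylim t₀)
      ≤ dist (y (ν j) (s j)) (ylim (s j)) + dist (ylim (s j)) (ylim t₀) := dist_triangle _ _ _
    _ < ε := by linarith

/-- If `x : (0,1] → [0,∞)` is continuous, strictly decreasing and blows up
at `0`; `y n : (0,1] → ℝ` are left continuous with finite right-hand limits; `ylim` is
continuous on `(0,1]`; `y n → ylim` uniformly on compact subintervals of `(0,1]` bounded
away from `0`; and `k n → ∞`; then the point sets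
`F n = {(x(j/k n), y n (j/k n)) : 1 ≤ j ≤ k n}` converge to the curve
`{(x t, ylim t) : 0 < t ≤ 1}` in the Painlevé–Kuratowski sense. -/
theorem pointSets_PKConv_to_curve
    (x : ℝ → ℝ) (y : ℕ → ℝ → ℝ) (ylim : ℝ → ℝ) (k : ℕ → ℕ)
    (hx_cont : ContinuousOn x (Ioc 0 1))
    (hx_nonneg : ∀ t ∈ Ioc (0:ℝ) 1, 0 ≤ x t)
    (hx_anti : StrictAntiOn x (Ioc 0 1))
    (hx_top : Tendsto x (nhdsWithin 0 (Ioc 0 1)) atTop)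
    (hy_leftcont : ∀ n, ∀ t ∈ Ioc (0:ℝ) 1,
      Tendsto (y n) (nhdsWithin t (Iio t)) (nhds (y n t)))
    (hy_rightlim : ∀ n, ∀ t ∈ Ico (0:ℝ) 1, ∃ L : ℝ,
      Tendsto (y n) (nhdsWithin t (Ioi t)) (nhds L))
    (hylim_cont : ContinuousOn ylim (Ioc 0 1))
    (hunif : ∀ a ∈ Ioc (0:ℝ) 1, TendstoUniformlyOn (fun n => y n) ylim atTop (Icc a 1))
    (hk : Tendsto k atTop atTop) :
    PKConv
      (fun n => {p : ℝ × ℝ | ∃ j : ℕ, 1 ≤ j ∧ j ≤ k n ∧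
        p = (x ((j : ℝ) / (k n : ℝ)), y n ((j : ℝ) / (k n : ℝ)))})
      {p : ℝ × ℝ | ∃ t ∈ Ioc (0:ℝ) 1, p = (x t, ylim t)} := by
  constructor
  · -- PK1
    rintro p ⟨t, ht, rfl⟩
    set j : ℕ → ℕ := fun n => ⌈t * (k n : ℝ)⌉₊ with hj
    set tn : ℕ → ℝ := fun n => (j n : ℝ) / (k n : ℝ) with htn
    have hk1 : ∀ᶠ n in atTop, 1 ≤ k n := hk.eventually (eventually_ge_atTop 1)
    have hkey : ∀ n, 1 ≤ k n → (t ≤ tn n ∧ tn n ≤ 1 ∧ tn n ≤ t + 1 / (k n : ℝ)) := by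
      intro n hn
      have hkpos : (0:ℝ) < (k n : ℝ) := by exact_mod_cast hn
      have h1 : t ≤ tn n := by
        rw [htn, le_div_iff₀ hkpos]
        exact Nat.le_ceil _
      have h2 : tn n ≤ 1 := by
        rw [htn, div_le_one hkpos]
        have : (j n : ℕ) ≤ k n := by
          rw [hj, Nat.ceil_le]
          calc t * (k n : ℝ) ≤ 1 * (k n : ℝ) := by nlinarith [ht.2, hkpos.le]
            _ = (k n : ℝ) := one_mul _
        exact_mod_cast this
      have h3 : tn n ≤ t + 1 / (k n : ℝ) := by
        rw [htn, div_le_iff₀ hkpos]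
        have := (Nat.ceil_lt_add_one (mul_nonneg ht.1.le hkpos.le)).le
        calc ((j n : ℕ) : ℝ) ≤ t * (k n : ℝ) + 1 := this
          _ = (t + 1 / (k n : ℝ)) * (k n : ℝ) := by field_simp
      exact ⟨h1, h2, h3⟩
    have htn_mem : ∀ᶠ n in atTop, tn n ∈ Icc t 1 :=
      hk1.mono fun n hn => ⟨(hkey n hn).1, (hkey n hn).2.1⟩
    have htn_lim : Tendsto tn atTop (nhds t) := by
      have hub : Tendsto (fun n => t + 1 / (k n : ℝ)) atTop (nhds t) := by
        have : Tendsto (fun n => 1 / ((k n : ℕ) : ℝ)) atTop (nhds 0) :=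
          tendsto_one_div_atTop_nhds_zero_nat.comp hk
        simpa using (tendsto_const_nhds (x := t)).add this
      refine tendsto_of_tendsto_of_tendsto_of_le_of_le' tendsto_const_nhds hub
        (hk1.mono fun n hn => (hkey n hn).1) (hk1.mono fun n hn => (hkey n hn).2.2)
    have hxlim : Tendsto (fun n => x (tn n)) atTop (nhds (x t)) := by
      apply (hx_cont t ht).tendsto.comp
      rw [tendsto_nhdsWithin_iff]
      exact ⟨htn_lim, htn_mem.mono fun n hn => ⟨lt_of_lt_of_le ht.1 hn.1, hn.2⟩⟩
    have hylim' : Tendsto (fun n => y n (tn n)) atTop (nhds (ylim t)) :=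
      aux_tendsto_y y ylim hylim_cont ht (hunif t ht) id tendsto_id tn htn_mem t
        ⟨le_refl t, ht.2⟩ htn_lim
    refine ⟨fun n => (x (tn n), y n (tn n)), ?_, hxlim.prodMk_nhds hylim'⟩
    filter_upwards [hk1] with n hn
    refine ⟨j n, ?_, ?_, rfl⟩
    · have hkpos : (0:ℝ) < (k n : ℝ) := by exact_mod_cast hn
      exact Nat.one_le_iff_ne_zero.mpr (Nat.ceil_pos.mpr (mul_pos ht.1 hkpos)).ne'
    · rw [hj, Nat.ceil_le]
      have hkpos : (0:ℝ) < (k n : ℝ) := by exact_mod_cast hn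
      calc t * (k n : ℝ) ≤ 1 * (k n : ℝ) := by nlinarith [ht.2, hkpos.le]
        _ = ((k n : ℕ) : ℝ) := one_mul _
  · -- PK2
    intro φ hφ yseq p hmem hlim
    choose m hm1 hm2 heq using hmem
    set s : ℕ → ℝ := fun i => (m i : ℝ) / (k (φ i) : ℝ) with hs
    have hkpos : ∀ i, (0:ℝ) < (k (φ i) : ℝ) := by
      intro i
      have : 1 ≤ k (φ i) := le_trans (hm1 i) (hm2 i)
      exact_mod_cast this
    have hsIoc : ∀ i, s i ∈ Ioc (0:ℝ) 1 := by
      intro i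
      constructor
      · apply div_pos _ (hkpos i)
        exact_mod_cast hm1 i
      · rw [div_le_one (hkpos i)]
        exact_mod_cast hm2 i
    have h1 : Tendsto (fun i => x (s i)) atTop (nhds p.1) := by
      have := (continuous_fst.tendsto p).comp hlim
      refine this.congr fun i => ?_
      simp [Function.comp, heq i, hs]
    -- bounded away from 0
    have hM : {u : ℝ | p.1 + 1 < x u} ∈ nhdsWithin 0 (Ioc 0 1) :=
      hx_top.eventually (eventually_gt_atTop (p.1 + 1))
    obtain ⟨ε, hε, hball⟩ := Metric.mem_nhdsWithin_iff.mp hM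
    set δ : ℝ := min (ε/2) 1 with hδ
    have hδpos : 0 < δ := lt_min (half_pos hε) one_pos
    have hδ1 : δ ≤ 1 := min_le_right _ _
    have hδprop : ∀ u, u ∈ Ioc (0:ℝ) δ → p.1 + 1 < x u := by
      intro u hu
      apply hball
      constructor
      · rw [Metric.mem_ball, Real.dist_eq, sub_zero, abs_of_pos hu.1]
        calc u ≤ δ := hu.2
          _ ≤ ε/2 := min_le_left _ _
          _ < ε := by linarith
      · exact ⟨hu.1, hu.2.trans hδ1⟩
    have hEv : ∀ᶠ i in atTop, s i ∈ Icc δ 1 := by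
      have hsmall : ∀ᶠ i in atTop, x (s i) < p.1 + 1 :=
        h1.eventually (gt_mem_nhds (lt_add_one p.1))
      filter_upwards [hsmall] with i hi
      refine ⟨?_, (hsIoc i).2⟩
      by_contra h
      push_neg at h
      exact absurd (hδprop (s i) ⟨(hsIoc i).1, h.le⟩) (by linarith)
    obtain ⟨N, hN⟩ := eventually_atTop.mp hEv
    obtain ⟨t₀, ht₀, ψ, hψ, hψlim⟩ :=
      (isCompact_Icc (a := δ) (b := 1)).tendsto_subseq
        (x := fun i => s (i + N)) (fun i => hN (i + N) (Nat.le_add_left N i))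
    have ht₀' : t₀ ∈ Ioc (0:ℝ) 1 := ⟨lt_of_lt_of_le hδpos ht₀.1, ht₀.2⟩
    set idx : ℕ → ℕ := fun i => ψ i + N with hidxdef
    have hidx : Tendsto idx atTop atTop :=
      tendsto_atTop_mono (fun i => (hψ.id_le i).trans (Nat.le_add_right _ N)) tendsto_id
    have hslim : Tendsto (fun i => s (idx i)) atTop (nhds t₀) := hψlim
    have hsmem : ∀ i, s (idx i) ∈ Icc δ 1 := fun i => hN (idx i) (Nat.le_add_left N (ψ i))
    have hx1 : Tendsto (fun i => x (s (idx i))) atTop (nhds (x t₀)) := by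
      apply (hx_cont t₀ ht₀').tendsto.comp
      rw [tendsto_nhdsWithin_iff]
      exact ⟨hslim, Eventually.of_forall fun i => hsIoc _⟩
    have hx2 : Tendsto (fun i => x (s (idx i))) atTop (nhds p.1) := h1.comp hidx
    have hp1 : p.1 = x t₀ := tendsto_nhds_unique hx2 hx1
    have hφidx : Tendsto (fun i => φ (idx i)) atTop atTop :=
      tendsto_atTop_mono (fun i => hφ.id_le (idx i)) hidx
    have hy1 : Tendsto (fun i => y (φ (idx i)) (s (idx i))) atTop (nhds (ylim t₀)) :=
      aux_tendsto_y y ylim hylim_cont ⟨hδpos, hδ1⟩ (hunif δ ⟨hδpos, hδ1⟩)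
        (fun i => φ (idx i)) hφidx (fun i => s (idx i)) (Eventually.of_forall hsmem)
        t₀ ht₀ hslim
    have hy2 : Tendsto (fun i => y (φ (idx i)) (s (idx i))) atTop (nhds p.2) := by
      have := (continuous_snd.tendsto p).comp (hlim.comp hidx)
      refine this.congr fun i => ?_
      simp [Function.comp, heq (idx i), hs]
    have hp2 : p.2 = ylim t₀ := tendsto_nhds_unique hy2 hy1
    exact ⟨t₀, ht₀', Prod.ext hp1 hp2⟩
end

section
/- Let $X_1, X_2, \ldots$ be iid with the exponential distribution $F(x) = 1 - e^{-\alpha x}$ for $x > 0$, where $\alpha > 0$, and let $X_{1:n} \le \cdots \le X_{n:n}$ be the order statistics of the first $n$. Then the random sets $\{(-\tfrac{1}{\alpha}\log(1 - \tfrac{i}{n+1}), X_{i:n}) : 1 \le i \le n\}$ converge in probability, in the Fell topology, to $\{(x,x) : 0 \le x < \infty\}$; equivalently, for every continuous $h : \mathbb{R}^2 \to [0,\infty)$ with compact support, $\mathbb{E}\big[\max_{1 \le i \le n} h(-\tfrac{1}{\alpha}\log(1 - \tfrac{i}{n+1}), X_{i:n})\big] \to \sup_{x \ge 0} h(x,x)$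 as $n \to \infty$. -/
/-!
By the strong law of large numbers applied to the indicators `1{X k ≤ t}`, almost surely the
empirical distribution function `#{k ≤ n | X k ≤ t} / n` converges to the exponential CDF `F` at
every rational `t`; as these functions are monotone and `F` is continuous, the convergence is
uniform on compacts. Since `X_{i:n} ≤ t` iff at least `i` sample points are `≤ t`, and `F`
increases by a definite amount over any interval of fixed length in a bounded range, the order
statistic `X_{i:n}` is then uniformly close to the quantile `F⁻¹(i/(n+1))` as long as the latter
stays bounded, while these quantiles fill `[0, ∞)` densely. Thus almost surely every point of the
QQ-plot in a compact set is close to the diagonal and every diagonal point is approached by the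
QQ-plot, which forces `sup h` to converge for continuous compactly supported `h ≥ 0`. Dominated
convergence (`0 ≤ sup h ≤ max h`) passes to expectations.
-/

open MeasureTheory Filter Set ProbabilityTheory

/-- `ord n i ω` (for `1 ≤ i ≤ n`) is the `i`-th smallest among `X 1 ω, …, X n ω`:
increasing in `i`, and a rearrangement of the first `n` sample values. -/
def IsIncOrderStat {Ω : Type*} (X : ℕ → Ω → ℝ) (ord : ℕ → ℕ → Ω → ℝ) : Prop :=
  ∀ ω n, (∀ i j, 1 ≤ i → i ≤ j → j ≤ n → ord n i ω ≤ ord n j ω) ∧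
    ∃ σ : Equiv.Perm (Fin n), ∀ i : Fin n, ord n (i.1 + 1) ω = X ((σ i).1 + 1) ω

open scoped Topology

theorem Monotone.tendstoUniformlyOn_of_tendsto_of_dense {ι : Type*} {l : Filter ι}
    {f : ι → ℝ → ℝ} {F : ℝ → ℝ} (hf : ∀ n, Monotone (f n)) (hF : Monotone F)
    (hFc : Continuous F) {D : Set ℝ} (hD : Dense D)
    (hlim : ∀ q ∈ D, Tendsto (fun n => f n q) l (𝓝 (F q))) {K : Set ℝ} (hK : IsCompact K) :
    TendstoUniformlyOn f F l K := by
  rw [Metric.tendstoUniformlyOn_iff]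
  intro ε hε
  have hbracket : ∀ t, ∃ q₁ ∈ D, ∃ q₂ ∈ D, t ∈ Ioo q₁ q₂ ∧ F q₂ - F q₁ < ε / 2 := by
    intro t
    obtain ⟨δ, hδ, hFδ⟩ := Metric.continuous_iff.1 hFc t (ε / 4) (by positivity)
    have hnear : ∀ q ∈ Ioo (t - δ) (t + δ), |F q - F t| < ε / 4 := fun q hq =>
      hFδ q (by rwa [← Real.ball_eq_Ioo] at hq)
    obtain ⟨q₁, hq₁D, hq₁⟩ := hD.exists_between (sub_lt_self t hδ)
    obtain ⟨q₂, hq₂D, hq₂⟩ := hD.exists_between (lt_add_of_pos_right t hδ)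
    have h₁ := abs_sub_lt_iff.1 (hnear q₁ ⟨hq₁.1, by linarith [hq₁.2]⟩)
    have h₂ := abs_sub_lt_iff.1 (hnear q₂ ⟨by linarith [hq₂.1], hq₂.2⟩)
    exact ⟨q₁, hq₁D, q₂, hq₂D, ⟨hq₁.2, hq₂.1⟩, by linarith [h₁.2, h₂.1]⟩
  choose q₁ hq₁D q₂ hq₂D hmem hgap using hbracket
  obtain ⟨T, -, hcover⟩ :=
    hK.elim_nhds_subcover (fun t => Ioo (q₁ t) (q₂ t)) fun t _ => isOpen_Ioo.mem_nhds (hmem t)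
  have hclose : ∀ q ∈ D, ∀ᶠ n in l, |f n q - F q| < ε / 2 := fun q hq =>
    (hlim q hq).eventually (Metric.ball_mem_nhds _ (by positivity))
  filter_upwards [(T.eventually_all).2 fun t _ => hclose _ (hq₁D t),
    (T.eventually_all).2 fun t _ => hclose _ (hq₂D t)] with n h₁ h₂ s hs
  obtain ⟨t, ht, hst⟩ := mem_iUnion₂.1 (hcover hs)
  -- `f n s` and `F s` both lie between the values at `q₁ t` and `q₂ t`
  have := abs_lt.1 (h₁ t ht)
  have := abs_lt.1 (h₂ t ht)
  rw [Real.dist_eq, abs_sub_lt_iff]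
  constructor <;> linarith [hf n hst.1.le, hf n hst.2.le, hF hst.1.le, hF hst.2.le, hgap t]

lemma tendsto_sSup_image_of_forall_eventually {E ι : Type*} [PseudoMetricSpace E]
    {l : Filter ι} {h : E → ℝ} (hc : Continuous h) (h0 : ∀ q, 0 ≤ h q)
    (hcs : HasCompactSupport h) {A : ι → Set E} {D : Set E}
    (hupper : ∀ K, IsCompact K → ∀ δ > 0, ∀ᶠ n in l, ∀ q ∈ A n ∩ K, ∃ d ∈ D, dist q d < δ)
    (hlower : ∀ d ∈ D, ∀ δ > 0, ∀ᶠ n in l, ∃ q ∈ A n, dist q d < δ) :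
    Tendsto (fun n => sSup (h '' A n)) l (𝓝 (sSup (h '' D))) := by
  obtain ⟨C, hC⟩ := hc.bounded_above_of_compact_support hcs
  have hbdd : ∀ S : Set E, BddAbove (h '' S) :=
    fun S => ⟨C, forall_mem_image.2 fun q _ => (le_abs_self _).trans (hC q)⟩
  have hnonneg : ∀ S : Set E, 0 ≤ sSup (h '' S) :=
    fun S => Real.sSup_nonneg (forall_mem_image.2 fun q _ => h0 q)
  refine tendsto_order.2 ⟨fun a ha => ?_, fun a ha => ?_⟩
  · rcases (h '' D).eq_empty_or_nonempty with hD | hD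
    · rw [hD, Real.sSup_empty] at ha
      exact Eventually.of_forall fun n => ha.trans_le (hnonneg _)
    obtain ⟨_, ⟨d, hdD, rfl⟩, had⟩ := exists_lt_of_lt_csSup hD ha
    obtain ⟨δ, hδ, hball⟩ := Metric.eventually_nhds_iff.1
      (hc.continuousAt.eventually (lt_mem_nhds had))
    filter_upwards [hlower d hdD δ hδ] with n ⟨q, hqA, hqd⟩
    exact (hball hqd).trans_le (le_csSup (hbdd _) (mem_image_of_mem h hqA))
  · obtain ⟨δ, hδ, hclose⟩ := Metric.uniformContinuous_iff.1
      (hcs.uniformContinuous_of_continuous hc) _ (half_pos (sub_pos.2 ha))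
    filter_upwards [hupper _ hcs.isCompact δ hδ] with n hn
    refine lt_of_le_of_lt (Real.sSup_le (forall_mem_image.2 fun q hq => ?_)
      (by linarith [hnonneg D])) (show sSup (h '' D) + (a - sSup (h '' D)) / 2 < a by linarith)
    by_cases hqK : q ∈ tsupport h
    · obtain ⟨d, hdD, hqd⟩ := hn q ⟨hq, hqK⟩
      have := (abs_sub_lt_iff.1 (hclose hqd)).1
      linarith [le_csSup (hbdd D) (mem_image_of_mem h hdD)]
    · rw [image_eq_zero_of_notMem_tsupport hqK]
      linarith [hnonneg D]

lemma norm_sSup_image_le {E : Type*} {h : E → ℝ} {C : ℝ} (h0 : ∀ q, 0 ≤ h q)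
    (hC : ∀ q, ‖h q‖ ≤ C) (hC0 : 0 ≤ C) (S : Set E) : ‖sSup (h '' S)‖ ≤ C := by
  rw [Real.norm_of_nonneg (Real.sSup_nonneg (forall_mem_image.2 fun q _ => h0 q))]
  exact Real.sSup_le (forall_mem_image.2 fun q _ => (le_abs_self _).trans (hC q)) hC0

lemma measurable_sSup_image_setOf {Ω E : Type*} [MeasurableSpace Ω] [MeasurableSpace E]
    {h : E → ℝ} (hh : Measurable h) {P : ℕ → Ω → E} {n : ℕ}
    (hP : ∀ i, 1 ≤ i → i ≤ n → Measurable (P i)) :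
    Measurable fun ω => sSup (h '' {q | ∃ i, 1 ≤ i ∧ i ≤ n ∧ q = P i ω}) := by
  have hrange : ∀ ω, h '' {q | ∃ i, 1 ≤ i ∧ i ≤ n ∧ q = P i ω} =
      range fun i : {i // 1 ≤ i ∧ i ≤ n} => h (P i ω) := fun ω => by
    ext y
    simp [and_assoc, eq_comm]
  simp_rw [hrange]
  exact Measurable.iSup fun i => hh.comp (hP i i.2.1 i.2.2)

open Finset in
noncomputable def sampleCount {Ω : Type*} (X : ℕ → Ω → ℝ) (n : ℕ) (t : ℝ) (ω : Ω) : ℕ :=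
  #{k ∈ range n | X (k + 1) ω ≤ t}

section

variable {Ω : Type*} {X : ℕ → Ω → ℝ}

lemma sampleCount_eq_sum (n : ℕ) (t : ℝ) (ω : Ω) :
    (sampleCount X n t ω : ℝ) = ∑ k ∈ Finset.range n, (Iic t).indicator 1 (X (k + 1) ω) := by
  rw [sampleCount, Finset.card_filter]
  push_cast
  simp [Set.indicator_apply]

lemma monotone_sampleCount_div (n : ℕ) (ω : Ω) :
    Monotone fun t => (sampleCount X n t ω : ℝ) / n := fun _ _ hst =>
  div_le_div_of_nonneg_right (Nat.mono_cast <| Finset.card_le_card <|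
    Finset.monotone_filter_right _ fun _ _ h => h.trans hst) n.cast_nonneg

lemma sampleCount_eq_zero {n : ℕ} {t : ℝ} {ω : Ω} (ht : t < 0) (hX : ∀ k, 0 < X k ω) :
    sampleCount X n t ω = 0 :=
  Finset.card_eq_zero.2 <| Finset.filter_false_of_mem fun _ _ => not_le.2 (ht.trans (hX _))

lemma measurable_sampleCount [MeasurableSpace Ω] (hX : ∀ k, Measurable (X k)) (n : ℕ) (t : ℝ) :
    Measurable (sampleCount X n t) := by
  have : sampleCount X n t = fun ω => ∑ k ∈ Finset.range n, if X (k + 1) ω ≤ t then 1 else 0 :=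
    funext fun ω => Finset.card_filter _ _
  rw [this]
  exact Finset.measurable_sum _ fun k _ =>
    Measurable.ite (measurableSet_le (hX _) measurable_const) measurable_const measurable_const

variable {ord : ℕ → ℕ → Ω → ℝ}

open Finset in
lemma IsIncOrderStat.le_iff_le_sampleCount (hord : IsIncOrderStat X ord) (ω : Ω) {n i : ℕ}
    (hi : 1 ≤ i) (hin : i ≤ n) (t : ℝ) : ord n i ω ≤ t ↔ i ≤ sampleCount X n t ω := by
  obtain ⟨hmono, σ, hσ⟩ := hord ω n
  have hsorted : Monotone fun j : Fin n => ord n (j + 1) ω :=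
    fun j k hjk => hmono _ _ (by omega) (by simpa using hjk) (by omega)
  have hcount : #{j : Fin n | ord n (j + 1) ω ≤ t} = sampleCount X n t ω := by
    simp_rw [hσ, card_filter, sampleCount, card_filter, ← Fin.sum_univ_eq_sum_range
      (fun k => if X (k + 1) ω ≤ t then 1 else 0)]
    exact Equiv.sum_comp σ (fun j : Fin n => if X (j + 1) ω ≤ t then 1 else 0)
  have := Tuple.lt_card_le_iff_apply_le_of_monotone (j := ⟨i - 1, by omega⟩) (a := t) hsorted
  rw [hcount, Nat.sub_add_cancel hi] at this
  rw [← this, Fin.val_mk]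
  omega

lemma IsIncOrderStat.measurable [MeasurableSpace Ω] (hord : IsIncOrderStat X ord)
    (hX : ∀ k, Measurable (X k)) {n i : ℕ} (hi : 1 ≤ i) (hin : i ≤ n) :
    Measurable (ord n i) := by
  refine measurable_of_Iic fun t => ?_
  have : ord n i ⁻¹' Iic t = {ω | i ≤ sampleCount X n t ω} :=
    Set.ext fun ω => hord.le_iff_le_sampleCount ω hi hin t
  rw [this]
  exact measurableSet_le measurable_const (measurable_sampleCount hX n t)

end

section

variable {Ω : Type*} [MeasurableSpace Ω] {μ : Measure Ω}

lemma map_eq_expMeasure [IsFiniteMeasure μ] {r : ℝ} (hr : 0 < r) {Y : Ω → ℝ} (hY : Measurable Y)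
    (hcdf : ∀ x, μ {ω | Y ω ≤ x} = ENNReal.ofReal (1 - Real.exp (-(r * x)))) :
    μ.map Y = expMeasure r := by
  have := isProbabilityMeasure_expMeasure hr
  refine Measure.ext_of_Iic _ _ fun x => ?_
  rw [Measure.map_apply hY measurableSet_Iic, ← ofReal_cdf, cdf_expMeasure_eq hr]
  refine (hcdf x).trans ?_
  split_ifs with hx
  · rfl
  · refine (ENNReal.ofReal_of_nonpos ?_).trans ENNReal.ofReal_zero.symm
    simpa using (mul_neg_of_pos_of_neg hr (not_le.1 hx)).le

lemma ae_tendsto_sampleCount_div [IsProbabilityMeasure μ] {X : ℕ → Ω → ℝ}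
    (hX : ∀ k, Measurable (X k)) (hindep : Pairwise (Function.onFun (· ⟂ᵢ[μ] ·) X))
    (hident : ∀ k, IdentDistrib (X k) (X 1) μ μ) (t : ℝ) :
    ∀ᵐ ω ∂μ, Tendsto (fun n : ℕ => (sampleCount X n t ω : ℝ) / n) atTop
      (𝓝 (cdf (μ.map (X 1)) t)) := by
  have := Measure.isProbabilityMeasure_map (μ := μ) (hX 1).aemeasurable
  have hφ : Measurable ((Iic t).indicator (1 : ℝ → ℝ)) := measurable_one.indicator measurableSet_Iic
  let Y : ℕ → Ω → ℝ := fun k => (Iic t).indicator 1 ∘ X (k + 1)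
  have hYint : Integrable (Y 0) μ :=
    (integrable_const (1 : ℝ)).mono' (hφ.comp (hX 1)).aestronglyMeasurable
      (ae_of_all _ fun ω => (norm_indicator_le_norm_self _ _).trans_eq norm_one)
  have hmean : μ[Y 0] = cdf (μ.map (X 1)) t := by
    rw [cdf_eq_real, map_measureReal_apply (hX 1) measurableSet_Iic]
    exact integral_indicator_one ((hX 1) measurableSet_Iic)
  have hSLLN := strong_law_ae Y hYint
    (fun i j hij => (hindep (by omega : i + 1 ≠ j + 1)).comp hφ hφ)
    (fun k => ((hident (k + 1)).trans (hident 1).symm).comp hφ)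
  filter_upwards [hSLLN] with ω hω
  rw [hmean] at hω
  simpa [Y, sampleCount_eq_sum, div_eq_inv_mul] using hω

end

noncomputable def expQuantile (r p : ℝ) : ℝ := -(1 / r) * Real.log (1 - p)

def qqPlot (r : ℝ) (x : ℕ → ℕ → ℝ) (n : ℕ) : Set (ℝ × ℝ) :=
  {q | ∃ i : ℕ, 1 ≤ i ∧ i ≤ n ∧ q = (expQuantile r (i / (n + 1)), x n i)}

def diagonalRay : Set (ℝ × ℝ) := {q | ∃ t : ℝ, 0 ≤ t ∧ q = (t, t)}

section

variable {r : ℝ}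

lemma cdf_expMeasure_eq_max (hr : 0 < r) (x : ℝ) :
    cdf (expMeasure r) x = max 0 (1 - Real.exp (-(r * x))) := by
  rw [cdf_expMeasure_eq hr]
  split_ifs with hx
  · refine (max_eq_right ?_).symm
    simpa using mul_nonneg hr.le hx
  · refine (max_eq_left ?_).symm
    simpa using (mul_neg_of_pos_of_neg hr (not_le.1 hx)).le

lemma continuous_cdf_expMeasure (hr : 0 < r) : Continuous (cdf (expMeasure r)) := by
  simp_rw [funext (cdf_expMeasure_eq_max hr)]
  fun_prop

lemma cdf_expMeasure_of_nonneg (hr : 0 < r) {x : ℝ} (hx : 0 ≤ x) :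
    cdf (expMeasure r) x = 1 - Real.exp (-(r * x)) := by
  rw [cdf_expMeasure_eq hr, if_pos hx]

lemma expQuantile_nonneg (hr : 0 < r) {p : ℝ} (hp0 : 0 ≤ p) (hp1 : p < 1) :
    0 ≤ expQuantile r p :=
  mul_nonneg_of_nonpos_of_nonpos (by simp [hr.le])
    (Real.log_nonpos (by linarith) (by linarith))

lemma cdf_expMeasure_expQuantile (hr : 0 < r) {p : ℝ} (hp0 : 0 ≤ p) (hp1 : p < 1) :
    cdf (expMeasure r) (expQuantile r p) = p := by
  rw [cdf_expMeasure_of_nonneg hr (expQuantile_nonneg hr hp0 hp1), expQuantile,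
    show -(r * (-(1 / r) * Real.log (1 - p))) = Real.log (1 - p) by field_simp,
    Real.exp_log (by linarith)]
  ring

lemma expQuantile_cdf_expMeasure (hr : 0 < r) {x : ℝ} (hx : 0 ≤ x) :
    expQuantile r (cdf (expMeasure r) x) = x := by
  rw [cdf_expMeasure_of_nonneg hr hx, expQuantile, sub_sub_cancel, Real.log_exp]
  field_simp

lemma continuousAt_expQuantile {p : ℝ} (hp : p < 1) : ContinuousAt (expQuantile r) p :=
  continuousAt_const.mul <| (continuousAt_const.sub continuousAt_id).log (sub_ne_zero.2 hp.ne')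

lemma mul_one_sub_exp_le_cdf_expMeasure_sub (hr : 0 < r) {x y d R : ℝ} (hx : 0 ≤ x)
    (hd : 0 ≤ d) (hxy : x + d ≤ y) (hyR : y ≤ R) :
    Real.exp (-(r * R)) * (1 - Real.exp (-(r * d))) ≤
      cdf (expMeasure r) y - cdf (expMeasure r) x := by
  rw [cdf_expMeasure_of_nonneg hr (by linarith), cdf_expMeasure_of_nonneg hr hx]
  have h1 : Real.exp (-(r * y)) ≤ Real.exp (-(r * x)) * Real.exp (-(r * d)) := by
    rw [← Real.exp_add]; exact Real.exp_le_exp.2 (by nlinarith)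
  have h2 : Real.exp (-(r * R)) ≤ Real.exp (-(r * x)) := Real.exp_le_exp.2 (by nlinarith)
  have h3 : Real.exp (-(r * d)) ≤ 1 := Real.exp_le_one_iff.2 (by nlinarith)
  nlinarith

lemma div_natCast_add_one_lt_one {i n : ℕ} (hin : i ≤ n) : (i : ℝ) / (n + 1) < 1 :=
  (div_lt_one (by positivity)).2 (by exact_mod_cast Nat.lt_succ_of_le hin)

lemma eventually_abs_sub_expQuantile_le (hr : 0 < r) {x : ℕ → ℕ → ℝ} {N : ℕ → ℝ → ℕ}
    (hchar : ∀ n i t, 1 ≤ i → i ≤ n → (x n i ≤ t ↔ i ≤ N n t))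
    (hN : ∀ n t, t < 0 → N n t = 0)
    (hunif : ∀ R, TendstoUniformlyOn (fun n t => (N n t : ℝ) / n) (cdf (expMeasure r)) atTop
      (Icc 0 R))
    {e : ℝ} (he : 0 < e) (M : ℝ) :
    ∀ᶠ n : ℕ in atTop, ∀ i, 1 ≤ i → i ≤ n → expQuantile r (i / (n + 1)) ≤ M →
      |x n i - expQuantile r (i / (n + 1))| ≤ e := by
  set F := cdf (expMeasure r)
  -- a lower bound for every increment of `F` over an interval of length `e` in `[0, M + e]`
  set γ := Real.exp (-(r * (M + e))) * (1 - Real.exp (-(r * e)))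
  have hγ : 0 < γ := mul_pos (Real.exp_pos _) (sub_pos.2 (Real.exp_lt_one_iff.2 (by nlinarith)))
  filter_upwards [Metric.tendstoUniformlyOn_iff.1 (hunif (M + e)) (γ / 2) (half_pos hγ),
    eventually_gt_atTop 0, tendsto_natCast_atTop_atTop.eventually_ge_atTop (2 / γ)]
    with n hNF hn hnγ i hi hin htM
  have hn' : (0 : ℝ) < n := Nat.cast_pos.2 hn
  have hnγ' : 2 ≤ n * γ := by rwa [div_le_iff₀ hγ] at hnγ
  set p : ℝ := i / (n + 1)
  have hp0 : 0 ≤ p := by positivity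
  have hp1 : p < 1 := div_natCast_add_one_lt_one hin
  have hip : (i : ℝ) = (n + 1) * p := by rw [mul_div_cancel₀ _ (by positivity)]
  set t := expQuantile r p
  have ht0 : 0 ≤ t := expQuantile_nonneg hr hp0 hp1
  have hFt : F t = p := cdf_expMeasure_expQuantile hr hp0 hp1
  have hcount : ∀ s ∈ Icc 0 (M + e), F s - γ / 2 < N n s / n ∧ N n s / n < F s + γ / 2 :=
    fun s hs => by have := abs_sub_lt_iff.1 (hNF s hs); constructor <;> linarith
  have hupper : x n i ≤ t + e := by
    have hgap : γ ≤ F (t + e) - F t :=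
      mul_one_sub_exp_le_cdf_expMeasure_sub hr ht0 he.le le_rfl (by linarith)
    have hlt := (hcount (t + e) ⟨by linarith, by linarith⟩).1
    rw [lt_div_iff₀ hn'] at hlt
    rw [hchar n i _ hi hin]
    exact_mod_cast (show (i : ℝ) ≤ N n (t + e) by nlinarith)
  have hlower : t - e < x n i := by
    by_contra! hle
    have hiN := (hchar n i _ hi hin).1 hle
    rcases lt_or_ge (t - e) 0 with hneg | hnonneg
    · rw [hN n _ hneg] at hiN
      omega
    have hgap : γ ≤ F t - F (t - e) :=
      mul_one_sub_exp_le_cdf_expMeasure_sub hr hnonneg he.le (by linarith) (by linarith)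
    have hlt := (hcount (t - e) ⟨hnonneg, by linarith⟩).2
    rw [div_lt_iff₀ hn'] at hlt
    have : (i : ℝ) ≤ N n (t - e) := by exact_mod_cast hiN
    nlinarith
  exact abs_le.2 ⟨by linarith, by linarith⟩

lemma eventually_exists_abs_expQuantile_sub_lt (hr : 0 < r) {s : ℝ} (hs : 0 ≤ s) {δ : ℝ}
    (hδ : 0 < δ) :
    ∀ᶠ n : ℕ in atTop, ∃ i, 1 ≤ i ∧ i ≤ n ∧ |expQuantile r (i / (n + 1)) - s| < δ := by
  have hp1 : cdf (expMeasure r) s < 1 := by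
    rw [cdf_expMeasure_of_nonneg hr hs]
    linarith [Real.exp_pos (-(r * s))]
  set p := cdf (expMeasure r) s with hp
  have hp0 : 0 ≤ p := cdf_nonneg _ s
  have hfrac : Tendsto (fun n : ℕ => ((⌊p * (n + 1)⌋₊ + 1 : ℕ) : ℝ) / (n + 1)) atTop (𝓝 p) := by
    have hden : Tendsto (fun n : ℕ => (n : ℝ) + 1) atTop atTop :=
      tendsto_atTop_add_const_right _ 1 tendsto_natCast_atTop_atTop
    have := ((tendsto_nat_floor_mul_div_atTop hp0).comp hden).add
      tendsto_one_div_add_atTop_nhds_zero_nat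
    rw [add_zero] at this
    refine this.congr fun n => ?_
    push_cast
    rw [add_div]
    rfl
  have hquant := (continuousAt_expQuantile (r := r) hp1).tendsto.comp hfrac
  rw [hp, expQuantile_cdf_expMeasure hr hs] at hquant
  filter_upwards [hfrac.eventually (gt_mem_nhds hp1),
    hquant.eventually (Metric.ball_mem_nhds s hδ)] with n hlt hball
  refine ⟨_, le_add_self, ?_, hball⟩
  rw [div_lt_one (by positivity)] at hlt
  exact_mod_cast Nat.lt_succ_iff.1 (by exact_mod_cast hlt)

lemma tendsto_sSup_image_qqPlot (hr : 0 < r) {h : ℝ × ℝ → ℝ} (hc : Continuous h)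
    (h0 : ∀ q, 0 ≤ h q) (hcs : HasCompactSupport h) {x : ℕ → ℕ → ℝ}
    (hclose : ∀ e > 0, ∀ M, ∀ᶠ n : ℕ in atTop, ∀ i, 1 ≤ i → i ≤ n →
      expQuantile r (i / (n + 1)) ≤ M → |x n i - expQuantile r (i / (n + 1))| ≤ e) :
    Tendsto (fun n => sSup (h '' qqPlot r x n)) atTop (𝓝 (sSup (h '' diagonalRay))) := by
  refine tendsto_sSup_image_of_forall_eventually hc h0 hcs ?_ ?_
  · intro K hK δ hδ
    obtain ⟨M, hM⟩ := (hK.image continuous_fst).bddAbove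
    filter_upwards [hclose (δ / 2) (half_pos hδ) M] with n hn
    rintro _ ⟨⟨i, hi, hin, rfl⟩, hqK⟩
    have ht0 := expQuantile_nonneg hr (by positivity) (div_natCast_add_one_lt_one hin)
    refine ⟨_, ⟨_, ht0, rfl⟩, ?_⟩
    have := hn i hi hin (hM (mem_image_of_mem Prod.fst hqK))
    rw [Prod.dist_eq, dist_self, Real.dist_eq]
    exact max_lt hδ (by linarith)
  · rintro _ ⟨s, hs, rfl⟩ δ hδ
    filter_upwards [eventually_exists_abs_expQuantile_sub_lt hr hs (half_pos hδ),
      hclose (δ / 2) (half_pos hδ) (s + δ)] with n ⟨i, hi, hin, his⟩ hn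
    refine ⟨_, ⟨i, hi, hin, rfl⟩, ?_⟩
    have := hn i hi hin (by linarith [abs_lt.1 his])
    rw [Prod.dist_eq, Real.dist_eq, Real.dist_eq]
    exact max_lt (by linarith) (by linarith [abs_sub_le (x n i) (expQuantile r (i / (n + 1))) s])

end

/-- If `X 1, X 2, …` are iid exponential with rate `α > 0`
(`F(x) = 1 - e^{-αx}`, `x > 0`), then the QQ-plot sets
`{(-(1/α) log(1 - i/(n+1)), X_{i:n}) : 1 ≤ i ≤ n}` converge in probability, in the Fell
topology, to the diagonal `{(x,x) : 0 ≤ x < ∞}`; equivalently, for every continuous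
`h : ℝ² → [0,∞)` with compact support, the expected sup of `h` over the random set
converges to the sup of `h` over the limit set. -/
theorem exponential_qqplot_tendstoInProb {Ω : Type*} [MeasurableSpace Ω]
    (μ : Measure Ω) [IsProbabilityMeasure μ]
    (X : ℕ → Ω → ℝ) (α : ℝ) (hα : 0 < α) (ord : ℕ → ℕ → Ω → ℝ)
    (hmeas : ∀ i, Measurable (X i))
    (hindep : iIndepFun X μ)
    (hcdf : ∀ i x, μ {ω | X i ω ≤ x} = ENNReal.ofReal (1 - Real.exp (-(α * x))))
    (hord : IsIncOrderStat X ord) :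
    ∀ h : ℝ × ℝ → ℝ, Continuous h → (∀ q, 0 ≤ h q) → HasCompactSupport h →
      Tendsto
        (fun n => ∫ ω, sSup (h '' {q : ℝ × ℝ | ∃ i : ℕ, 1 ≤ i ∧ i ≤ n ∧
            q = (-(1 / α) * Real.log (1 - (i : ℝ) / ((n : ℝ) + 1)), ord n i ω)}) ∂μ)
        atTop
        (nhds (sSup (h '' {q : ℝ × ℝ | ∃ t : ℝ, 0 ≤ t ∧ q = (t, t)}))) := by
  intro h hc h0 hcs
  have hlaw : ∀ k, μ.map (X k) = expMeasure α := fun k => map_eq_expMeasure hα (hmeas k) (hcdf k)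
  have hident : ∀ k, IdentDistrib (X k) (X 1) μ μ :=
    fun k => ⟨(hmeas k).aemeasurable, (hmeas 1).aemeasurable, (hlaw k).trans (hlaw 1).symm⟩
  have hpos : ∀ᵐ ω ∂μ, ∀ k, 0 < X k ω := ae_all_iff.2 fun k => by simp [ae_iff, hcdf k 0]
  have hlln : ∀ᵐ ω ∂μ, ∀ q : ℚ, Tendsto (fun n : ℕ => (sampleCount X n q ω : ℝ) / n) atTop
      (𝓝 (cdf (expMeasure α) q)) := ae_all_iff.2 fun q => by
    simpa only [hlaw] using
      ae_tendsto_sampleCount_div hmeas (fun i j hij => hindep.indepFun hij) hident q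
  have hsup : ∀ᵐ ω ∂μ, Tendsto (fun n => sSup (h '' qqPlot α (ord · · ω) n)) atTop
      (𝓝 (sSup (h '' diagonalRay))) := by
    filter_upwards [hpos, hlln] with ω hposω hllnω
    have hunif (R : ℝ) := Monotone.tendstoUniformlyOn_of_tendsto_of_dense
      (monotone_sampleCount_div · ω) (cdf _).mono (continuous_cdf_expMeasure hα)
      Rat.denseRange_cast (forall_mem_range.2 hllnω) (isCompact_Icc (a := 0) (b := R))
    exact tendsto_sSup_image_qqPlot hα hc h0 hcs fun e he M =>
      eventually_abs_sub_expQuantile_le hα (fun _ _ t => hord.le_iff_le_sampleCount ω (t := t))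
        (fun _ _ ht => sampleCount_eq_zero ht hposω) hunif he M
  obtain ⟨C, hC⟩ := hc.bounded_above_of_compact_support hcs
  have hdom := tendsto_integral_of_dominated_convergence (fun _ => C)
    (fun n => (measurable_sSup_image_setOf hc.measurable fun i hi hin =>
      measurable_const.prodMk (hord.measurable hmeas hi hin)).aestronglyMeasurable)
    (integrable_const C)
    (fun n => ae_of_all _ fun ω => norm_sSup_image_le h0 hC ((norm_nonneg _).trans (hC 0)) _) hsup
  rwa [integral_const, probReal_univ, one_smul] at hdom
end

section
/- For each $n$, let $F_n = \{(x_i(n), y_i(n)) : 1 \le i \le k_n\}$ be a set of $k_n$ distinct points in $\mathbb{R}^2$ with $k_n \to \infty$, and suppose $F_n$ converges in the Hausdorff metric to a bounded closed line segment $F \subset \mathbb{R}^2$ of positive length and finite slope $m$. Suppose further there exists $\delta > 0$ such that $p_{\delta}^n := \#\big(F_n \cap \big((\bar{x}_n - \delta, \bar{x}_n + \delta) \times (\bar{y}_n - \delta, \bar{y}_n + \delta)\big)\big) / k_n$ converges to some $p_{\delta} \in [0,1)$, where $\bar{x}_n = \tfrac{1}{k_n}\sum_i x_i(n)$ and $\bar{y}_n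 = \tfrac{1}{k_n}\sum_i y_i(n)$. Then the least squares slope $m_n = \sum_i (y_i(n) - \bar{y}_n)(x_i(n) - \bar{x}_n) / \sum_i (x_i(n) - \bar{x}_n)^2$ is well-defined for all sufficiently large $n$ and $m_n \to m$ as $n \to \infty$. -/
open Filter Set

/-!
Write `rᵢ = yᵢ - m xᵢ - (b - m a)` for the vertical residual of the `i`-th point from the
line through the segment; it is `O(d)` where `d` is the Hausdorff distance. Since the
deviations `xᵢ - x̄` sum to zero, the numerator of the least squares slope is
`m Q + ∑ rᵢ (xᵢ - x̄)` with `Q = ∑ (xᵢ - x̄)²`, so by Cauchy–Schwarz the slope is within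
`O(d) √(k / Q)` of `m`. A point outside the `δ`-box around the mean, but within `O(d)` of
the line through the mean with slope `m`, has `|xᵢ - x̄| ≳ δ / (1 + |m|)`; as a fixed
proportion of the points lies outside the box, `Q ≳ k`, and the slope error is `O(d) → 0`.
-/

namespace LeastSquares

open Finset

variable {ι : Type*} (s : Finset ι) (x y : ι → ℝ)

lemma sum_sub_mean_eq_zero : ∑ i ∈ s, (x i - (∑ j ∈ s, x j) / #s) = 0 := by
  rcases s.eq_empty_or_nonempty with rfl | hs
  · simp
  · rw [sum_sub_distrib, sum_const, nsmul_eq_mul, mul_div_cancel₀ _ (by positivity), sub_self]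

lemma sum_mul_sub_mean_sub_mul_sum_sq {xb yb : ℝ} (hxb : xb = (∑ i ∈ s, x i) / #s)
    (m c : ℝ) :
    ∑ i ∈ s, (y i - yb) * (x i - xb) - m * ∑ i ∈ s, (x i - xb) ^ 2 =
      ∑ i ∈ s, (y i - m * x i - c) * (x i - xb) := by
  have shift : ∀ c', ∑ i ∈ s, (y i - m * x i - c') * (x i - xb) =
      ∑ i ∈ s, (y i - m * x i) * (x i - xb) := fun c' => by
    simp_rw [sub_mul _ c']
    rw [sum_sub_distrib, ← mul_sum, hxb, sum_sub_mean_eq_zero s x, mul_zero, sub_zero]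
  rw [shift c, ← shift (yb - m * xb), mul_sum, ← sum_sub_distrib]
  exact sum_congr rfl fun i _ => by ring

lemma abs_sub_mean_sub_mul_sub_mean_le (hs : s.Nonempty) {xb yb m c η : ℝ}
    (hxb : xb = (∑ i ∈ s, x i) / #s) (hyb : yb = (∑ i ∈ s, y i) / #s)
    (hr : ∀ i ∈ s, |y i - m * x i - c| ≤ η) :
    ∀ i ∈ s, |(y i - yb) - m * (x i - xb)| ≤ 2 * η := by
  have hmean : yb - m * xb - c = (∑ i ∈ s, (y i - m * x i - c)) / #s := by
    rw [hxb, hyb, sum_sub_distrib, sum_sub_distrib, ← mul_sum, sum_const, nsmul_eq_mul]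
    field_simp [hs.card_pos.ne']
  have hmean_le : |yb - m * xb - c| ≤ η := by
    rw [hmean, abs_div, Nat.abs_cast, div_le_iff₀ (by exact_mod_cast hs.card_pos)]
    calc |∑ i ∈ s, (y i - m * x i - c)| ≤ ∑ i ∈ s, |y i - m * x i - c| := abs_sum_le_sum_abs _ _
      _ ≤ #s • η := sum_le_card_nsmul _ _ _ hr
      _ = η * #s := by rw [nsmul_eq_mul, mul_comm]
  intro i hi
  calc |(y i - yb) - m * (x i - xb)| = |(y i - m * x i - c) - (yb - m * xb - c)| := by
        congr 1; ring
    _ ≤ |y i - m * x i - c| + |yb - m * xb - c| := abs_sub _ _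
    _ ≤ 2 * η := by linarith [hr i hi]

lemma mul_card_mul_sq_le_sum_sq (f : ι → ℝ) (P : ι → Prop) [DecidablePred P] {θ c : ℝ}
    (hP : (#(s.filter P) : ℝ) ≤ θ * #s) (hc0 : 0 ≤ c) (hc : ∀ i ∈ s, ¬ P i → c ≤ |f i|) :
    (1 - θ) * #s * c ^ 2 ≤ ∑ i ∈ s, f i ^ 2 := by
  have hcard : (#(s.filter (¬ P ·)) : ℝ) = #s - #(s.filter P) := by
    rw [← card_filter_add_card_filter_not (s := s) P]
    push_cast
    ring
  calc (1 - θ) * #s * c ^ 2 ≤ #(s.filter (¬ P ·)) * c ^ 2 := by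
        gcongr
        linarith
    _ = ∑ i ∈ s.filter (¬ P ·), c ^ 2 := by rw [sum_const, nsmul_eq_mul]
    _ ≤ ∑ i ∈ s.filter (¬ P ·), f i ^ 2 := sum_le_sum fun i hi => by
        rw [mem_filter] at hi
        rw [← sq_abs (f i)]
        exact pow_le_pow_left₀ hc0 (hc i hi.1 hi.2) 2
    _ ≤ ∑ i ∈ s, f i ^ 2 :=
        sum_le_sum_of_subset_of_nonneg (filter_subset _ _) fun _ _ _ => sq_nonneg _

lemma div_le_abs_of_abs_sub_mul_le {u v m δ : ℝ} (hδ : 0 ≤ δ) (hv : |v - m * u| ≤ δ / 2)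
    (h : ¬ (|u| < δ ∧ |v| < δ)) : δ / (2 * (1 + |m|)) ≤ |u| := by
  have hv' : |v| ≤ |m| * |u| + δ / 2 := by
    linarith [abs_sub_abs_le_abs_sub v (m * u), abs_mul m u]
  rw [div_le_iff₀ (by positivity)]
  rcases not_and_or.mp h with h | h <;> rw [not_lt] at h <;>
    nlinarith [abs_nonneg m, abs_nonneg u]

lemma abs_div_sub_le_of_sq_sub_mul_le {N Q K m η q : ℝ} (hq : 0 < q) (hη : 0 ≤ η)
    (hQ : K * q ≤ Q) (hQ0 : 0 < Q) (hNQ : (N - m * Q) ^ 2 ≤ K * η ^ 2 * Q) :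
    |N / Q - m| ≤ η / √q := by
  refine abs_le_of_sq_le_sq ?_ (by positivity)
  calc (N / Q - m) ^ 2 = (N - m * Q) ^ 2 / Q ^ 2 := by field_simp
    _ ≤ K * η ^ 2 * Q / Q ^ 2 := by gcongr
    _ = K * η ^ 2 / Q := by field_simp
    _ ≤ η ^ 2 / q := by
        rw [div_le_div_iff₀ hQ0 hq]
        nlinarith [sq_nonneg η]
    _ = (η / √q) ^ 2 := by rw [div_pow, Real.sq_sqrt hq.le]

theorem abs_lsSlope_sub_le (hs : s.Nonempty) {xb yb m c η δ θ : ℝ}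
    (hxb : xb = (∑ i ∈ s, x i) / #s) (hyb : yb = (∑ i ∈ s, y i) / #s)
    (hδ : 0 < δ) (hθ : θ < 1) (hr : ∀ i ∈ s, |y i - m * x i - c| ≤ η) (hηδ : 4 * η ≤ δ)
    (hbox : (#(s.filter fun i => (xb - δ < x i ∧ x i < xb + δ) ∧
      (yb - δ < y i ∧ y i < yb + δ)) : ℝ) ≤ θ * #s) :
    0 < ∑ i ∈ s, (x i - xb) ^ 2 ∧
    |(∑ i ∈ s, (y i - yb) * (x i - xb)) / (∑ i ∈ s, (x i - xb) ^ 2) - m| ≤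
      η / √((1 - θ) * (δ / (2 * (1 + |m|))) ^ 2) := by
  set c₀ := δ / (2 * (1 + |m|))
  have hη : 0 ≤ η := let ⟨i, hi⟩ := hs; (abs_nonneg _).trans (hr i hi)
  have hdev := abs_sub_mean_sub_mul_sub_mean_le s x y hs hxb hyb hr
  have hfar : ∀ i ∈ s, ¬ ((xb - δ < x i ∧ x i < xb + δ) ∧ (yb - δ < y i ∧ y i < yb + δ)) →
      c₀ ≤ |x i - xb| := fun i hi hout =>
    div_le_abs_of_abs_sub_mul_le (v := y i - yb) hδ.le (by linarith [hdev i hi]) fun ⟨hx, hy⟩ =>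
      hout ⟨⟨by linarith [abs_lt.mp hx], by linarith [abs_lt.mp hx]⟩,
        ⟨by linarith [abs_lt.mp hy], by linarith [abs_lt.mp hy]⟩⟩
  have hQ := mul_card_mul_sq_le_sum_sq s (fun i => x i - xb) _ hbox (by positivity) hfar
  have hq : 0 < (1 - θ) * c₀ ^ 2 := mul_pos (by linarith) (by positivity)
  have hQ0 : 0 < ∑ i ∈ s, (x i - xb) ^ 2 :=
    lt_of_lt_of_le (by have := hs.card_pos; positivity) hQ
  have hNQ : ((∑ i ∈ s, (y i - yb) * (x i - xb)) - m * ∑ i ∈ s, (x i - xb) ^ 2) ^ 2 ≤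
      #s * η ^ 2 * ∑ i ∈ s, (x i - xb) ^ 2 := by
    rw [sum_mul_sub_mean_sub_mul_sum_sq s x y hxb m c]
    calc _ ≤ (∑ i ∈ s, (y i - m * x i - c) ^ 2) * ∑ i ∈ s, (x i - xb) ^ 2 :=
          sum_mul_sq_le_sq_mul_sq _ _ _
      _ ≤ #s * η ^ 2 * ∑ i ∈ s, (x i - xb) ^ 2 := by
          gcongr
          calc ∑ i ∈ s, (y i - m * x i - c) ^ 2 ≤ #s • η ^ 2 :=
                sum_le_card_nsmul _ _ _ fun i hi => by
                  rw [← sq_abs]; exact pow_le_pow_left₀ (abs_nonneg _) (hr i hi) 2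
            _ = #s * η ^ 2 := nsmul_eq_mul _ _
  exact ⟨hQ0, abs_div_sub_le_of_sq_sub_mul_le hq hη (by linarith) hQ0 hNQ⟩

end LeastSquares

def slopeSegment (a b m ℓ : ℝ) : Set (ℝ × ℝ) :=
  {q : ℝ × ℝ | ∃ t : ℝ, 0 ≤ t ∧ t ≤ ℓ ∧ q = (a + t, b + m * t)}

def indexedPoints (k : ℕ) (x y : ℕ → ℝ) : Set (ℝ × ℝ) :=
  {p : ℝ × ℝ | ∃ i : ℕ, 1 ≤ i ∧ i ≤ k ∧ p = (x i, y i)}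

/- The residual `p.2 - m p.1 - (b - m a)` vanishes on the segment and is `(1 + |m|)`-Lipschitz
for the sup metric that Mathlib puts on `ℝ × ℝ`. -/
lemma abs_sub_mul_sub_le_hausdorffDist {S : Set (ℝ × ℝ)} (hS : Bornology.IsBounded S)
    {p : ℝ × ℝ} (hp : p ∈ S) {a b m ℓ : ℝ} (hℓ : 0 ≤ ℓ) :
    |p.2 - m * p.1 - (b - m * a)| ≤ (1 + |m|) *
      Metric.hausdorffDist S (slopeSegment a b m ℓ) := by
  set T := slopeSegment a b m ℓ
  have hT : T.Nonempty := ⟨_, 0, le_rfl, hℓ, rfl⟩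
  have hTb : Bornology.IsBounded T :=
    (isCompact_Icc.image (f := fun t : ℝ => (a + t, b + m * t)) (by fun_prop)).isBounded.subset
      (by rintro _ ⟨t, h0, h1, rfl⟩; exact ⟨t, ⟨h0, h1⟩, rfl⟩)
  calc |p.2 - m * p.1 - (b - m * a)| ≤ (1 + |m|) * Metric.infDist p T := by
        rw [← div_le_iff₀' (by positivity), Metric.le_infDist hT]
        rintro _ ⟨t, -, -, rfl⟩
        rw [div_le_iff₀' (by positivity), Prod.dist_eq, Real.dist_eq, Real.dist_eq]
        calc |p.2 - m * p.1 - (b - m * a)| = |(p.2 - (b + m * t)) - m * (p.1 - (a + t))| := by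
              congr 1; ring
          _ ≤ |p.2 - (b + m * t)| + |m| * |p.1 - (a + t)| := by
              rw [← abs_mul]; exact abs_sub _ _
          _ ≤ (1 + |m|) * max |p.1 - (a + t)| |p.2 - (b + m * t)| := by
              nlinarith [le_max_left |p.1 - (a + t)| |p.2 - (b + m * t)|,
                le_max_right |p.1 - (a + t)| |p.2 - (b + m * t)|, abs_nonneg m]
    _ ≤ (1 + |m|) * Metric.hausdorffDist S T := by
        gcongr
        exact Metric.infDist_le_hausdorffDist_of_mem hp
          (Metric.hausdorffEDist_ne_top_of_nonempty_of_bounded ⟨p, hp⟩ hT hS hTb)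

lemma abs_lsSlope_sub_le_of_hausdorffDist_lt {k : ℕ} (hk : 1 ≤ k) {x y : ℕ → ℝ}
    {xb yb m a b ℓ δ θ : ℝ} (hℓ : 0 ≤ ℓ)
    (hxb : xb = (∑ i ∈ Finset.Icc 1 k, x i) / (k : ℝ))
    (hyb : yb = (∑ i ∈ Finset.Icc 1 k, y i) / (k : ℝ)) (hδ : 0 < δ) (hθ : θ < 1)
    (hd : Metric.hausdorffDist (indexedPoints k x y) (slopeSegment a b m ℓ) <
      δ / (4 * (1 + |m|)))
    (hfrac : (((Finset.Icc 1 k).filter fun i => (xb - δ < x i ∧ x i < xb + δ) ∧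
        (yb - δ < y i ∧ y i < yb + δ)).card : ℝ) / k < θ) :
    0 < ∑ i ∈ Finset.Icc 1 k, (x i - xb) ^ 2 ∧
    |(∑ i ∈ Finset.Icc 1 k, (y i - yb) * (x i - xb)) /
        (∑ i ∈ Finset.Icc 1 k, (x i - xb) ^ 2) - m| ≤
      (1 + |m|) / √((1 - θ) * (δ / (2 * (1 + |m|))) ^ 2) *
        Metric.hausdorffDist (indexedPoints k x y) (slopeSegment a b m ℓ) := by
  have hk₀ : (0 : ℝ) < k := by exact_mod_cast hk
  have hcard : ((Finset.Icc 1 k).card : ℝ) = k := by simp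
  have hS : Bornology.IsBounded (indexedPoints k x y) :=
    ((Set.finite_Icc 1 k).image fun i => (x i, y i)).isBounded.subset
      (by rintro _ ⟨i, h1, h2, rfl⟩; exact ⟨i, ⟨h1, h2⟩, rfl⟩)
  have hr (i) (hi : i ∈ Finset.Icc 1 k) : |y i - m * x i - (b - m * a)| ≤
      (1 + |m|) * Metric.hausdorffDist (indexedPoints k x y) (slopeSegment a b m ℓ) :=
    abs_sub_mul_sub_le_hausdorffDist hS
      ⟨i, (Finset.mem_Icc.1 hi).1, (Finset.mem_Icc.1 hi).2, rfl⟩ hℓ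
  rw [lt_div_iff₀ (by positivity)] at hd
  rw [div_lt_iff₀ hk₀, ← hcard] at hfrac
  rw [← hcard] at hxb hyb
  have := LeastSquares.abs_lsSlope_sub_le _ x y (Finset.nonempty_Icc.2 hk) hxb hyb hδ hθ hr
    (by linarith) hfrac.le
  exact ⟨this.1, this.2.trans_eq (by ring)⟩

theorem lsSlope_tendsto_of_hausdorff_tendsto_general
    (k : ℕ → ℕ) (x y : ℕ → ℕ → ℝ) (xb yb : ℕ → ℝ)
    (m a b ℓ : ℝ) (hℓ : 0 < ℓ)
    (hk : Tendsto k atTop atTop)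
    (hxb : ∀ n, xb n = (∑ i ∈ Finset.Icc 1 (k n), x n i) / (k n : ℝ))
    (hyb : ∀ n, yb n = (∑ i ∈ Finset.Icc 1 (k n), y n i) / (k n : ℝ))
    (hconv : Tendsto (fun n => Metric.hausdorffDist
        {p : ℝ × ℝ | ∃ i : ℕ, 1 ≤ i ∧ i ≤ k n ∧ p = (x n i, y n i)}
        {p : ℝ × ℝ | ∃ t : ℝ, 0 ≤ t ∧ t ≤ ℓ ∧ p = (a + t, b + m * t)})
      atTop (nhds 0))
    (δ : ℝ) (hδ : 0 < δ) (pδ : ℝ) (hpδ1 : pδ < 1)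
    (hbox : Tendsto (fun n =>
        (((Finset.Icc 1 (k n)).filter (fun i =>
          (xb n - δ < x n i ∧ x n i < xb n + δ) ∧
          (yb n - δ < y n i ∧ y n i < yb n + δ))).card : ℝ) / (k n : ℝ))
      atTop (nhds pδ)) :
    (∀ᶠ n in atTop, ∑ i ∈ Finset.Icc 1 (k n), (x n i - xb n) ^ 2 ≠ 0) ∧
    Tendsto (fun n =>
        (∑ i ∈ Finset.Icc 1 (k n), (y n i - yb n) * (x n i - xb n)) /
        (∑ i ∈ Finset.Icc 1 (k n), (x n i - xb n) ^ 2))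
      atTop (nhds m) := by
  have hd₀ : Tendsto (fun n => Metric.hausdorffDist (indexedPoints (k n) (x n) (y n))
      (slopeSegment a b m ℓ)) atTop (nhds 0) := hconv
  have hestimate := fun n (hk₁ : 1 ≤ k n) hd hfrac =>
    abs_lsSlope_sub_le_of_hausdorffDist_lt (m := m) (a := a) (b := b) hk₁ hℓ.le (hxb n) (hyb n)
      hδ (show (1 + pδ) / 2 < 1 by linarith) hd hfrac
  have heventually := (hk.eventually_ge_atTop 1).and <|
    (hd₀.eventually_lt_const (show 0 < δ / (4 * (1 + |m|)) by positivity)).and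
      (hbox.eventually_lt_const (show pδ < (1 + pδ) / 2 by linarith))
  refine ⟨heventually.mono fun n ⟨hk₁, hd, hfrac⟩ => (hestimate n hk₁ hd hfrac).1.ne', ?_⟩
  rw [tendsto_iff_dist_tendsto_zero]
  refine squeeze_zero' (Eventually.of_forall fun n => dist_nonneg)
    (heventually.mono fun n ⟨hk₁, hd, hfrac⟩ => (hestimate n hk₁ hd hfrac).2) ?_
  simpa using hd₀.const_mul ((1 + |m|) / √((1 - (1 + pδ) / 2) * (δ / (2 * (1 + |m|))) ^ 2))

/-- Suppose the finite point sets
`F n = {(x n i, y n i) : 1 ≤ i ≤ k n}` (with `k n → ∞` distinct points) converge in the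
Hausdorff metric to a bounded closed line segment of positive length and finite slope
`m`, and that for some `δ > 0` the proportion of points of `F n` in the box
`(x̄ₙ - δ, x̄ₙ + δ) × (ȳₙ - δ, ȳₙ + δ)` around the coordinate means converges to some
`p < 1`. Then the least squares slope through `F n` is well defined for all large `n`
and converges to `m`. -/
theorem lsSlope_tendsto_of_hausdorff_tendsto
    (k : ℕ → ℕ) (x y : ℕ → ℕ → ℝ) (xb yb : ℕ → ℝ)
    (m a b ℓ : ℝ) (hℓ : 0 < ℓ)
    (hk : Tendsto k atTop atTop)
    (hdistinct : ∀ n, Set.InjOn (fun i => (x n i, y n i)) (Set.Icc 1 (k n)))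
    (hxb : ∀ n, xb n = (∑ i ∈ Finset.Icc 1 (k n), x n i) / (k n : ℝ))
    (hyb : ∀ n, yb n = (∑ i ∈ Finset.Icc 1 (k n), y n i) / (k n : ℝ))
    (hconv : Tendsto (fun n => Metric.hausdorffDist
        {p : ℝ × ℝ | ∃ i : ℕ, 1 ≤ i ∧ i ≤ k n ∧ p = (x n i, y n i)}
        {p : ℝ × ℝ | ∃ t : ℝ, 0 ≤ t ∧ t ≤ ℓ ∧ p = (a + t, b + m * t)})
      atTop (nhds 0))
    (δ : ℝ) (hδ : 0 < δ) (pδ : ℝ) (hpδ0 : 0 ≤ pδ) (hpδ1 : pδ < 1)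
    (hbox : Tendsto (fun n =>
        (((Finset.Icc 1 (k n)).filter (fun i =>
          (xb n - δ < x n i ∧ x n i < xb n + δ) ∧
          (yb n - δ < y n i ∧ y n i < yb n + δ))).card : ℝ) / (k n : ℝ))
      atTop (nhds pδ)) :
    (∀ᶠ n in atTop, ∑ i ∈ Finset.Icc 1 (k n), (x n i - xb n) ^ 2 ≠ 0) ∧
    Tendsto (fun n =>
        (∑ i ∈ Finset.Icc 1 (k n), (y n i - yb n) * (x n i - xb n)) /
        (∑ i ∈ Finset.Icc 1 (k n), (x n i - xb n) ^ 2))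
      atTop (nhds m) :=
  lsSlope_tendsto_of_hausdorff_tendsto_general k x y xb yb m a b ℓ hℓ hk hxb hyb hconv δ hδ pδ hpδ1
    hbox
end

section
/- For each $n$, let $F_n = \{(x_i(n), y_i(n)) : 1 \le i \le k_n\}$ be a set of $k_n$ distinct points in $\mathbb{R}^2$ with $k_n \to \infty$, and suppose $F_n$ converges in the Hausdorff metric to a bounded closed line segment $F \subset \mathbb{R}^2$ of positive length and finite slope $m$. Suppose the coordinate means satisfy $\bar{x}_n \to \mu_x \in \mathbb{R}$ and $\bar{y}_n \to \mu_y \in \mathbb{R}$, and that there exists $\delta > 0$ such that $\#\big(F_n \cap \big((\mu_x - \delta, \mu_x + \delta) \times (\mu_y - \delta, \mu_y + \delta)\big)\big) / k_n$ converges to some $p_{\delta} \in [0,1)$. Then the least squares slope $m_n = \sum_i (y_i(n) - \bar{y}_n)(x_i(n) - \bar{x}_n) / \sum_i (x_i(n) - \bar{x}_n)^2$ is well-defined for all sufficiently large $n$ and $m_n \to m$ as $n \to \infty$. -/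
/-!
Every point of `F n` lies within `h n := D(F n, F)` of the segment, so its vertical offset
`r = y - b - m (x - a)` from the line carrying `F` is at most `(1 + |m|) h n`, and so is the
offset of the mean; in particular `(μx, μy)` lies on the line. The numerator minus `m` times the
denominator of the slope is `∑ (r_i - r̄) (x_i - x̄) = O(k n · h n)`. For the denominator, a
fraction at least `1 - p_δ` of the points lies outside the `δ`-box around `(μx, μy)`, and a point
close to the line but outside the box is at horizontal distance `≳ δ / (1 + |m|)` from `μx`,
hence from `x̄`; so the denominator is at least `c · k n` with `c > 0`, and the slope converges
to `m`.
-/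

open Filter Set Metric Topology
open scoped BigOperators

def graphSegment (a b m ℓ : ℝ) : Set (ℝ × ℝ) :=
  {p | ∃ t : ℝ, 0 ≤ t ∧ t ≤ ℓ ∧ p = (a + t, b + m * t)}

def lineResidual (a b m x y : ℝ) : ℝ := y - b - m * (x - a)

noncomputable def lsSlope {ι : Type*} (s : Finset ι) (x y : ι → ℝ) : ℝ :=
  (∑ i ∈ s, (y i - 𝔼 j ∈ s, y j) * (x i - 𝔼 j ∈ s, x j)) / ∑ i ∈ s, (x i - 𝔼 j ∈ s, x j) ^ 2

theorem lineResidual_sub_lineResidual (a b m x y x' y' : ℝ) :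
    lineResidual a b m x y - lineResidual a b m x' y' = lineResidual x' y' m x y := by
  unfold lineResidual; ring

section Segment

variable {a b m ℓ : ℝ}

theorem graphSegment_eq_image :
    graphSegment a b m ℓ = (fun t : ℝ => (a + t, b + m * t)) '' Icc 0 ℓ := by
  ext p
  simp only [graphSegment, mem_ofPred_eq, mem_image, mem_Icc]
  exact ⟨fun ⟨t, h0, hℓ, hp⟩ => ⟨t, ⟨h0, hℓ⟩, hp.symm⟩,
    fun ⟨t, ⟨h0, hℓ⟩, hp⟩ => ⟨t, h0, hℓ, hp.symm⟩⟩

theorem isCompact_graphSegment : IsCompact (graphSegment a b m ℓ) := by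
  rw [graphSegment_eq_image]
  exact isCompact_Icc.image (by fun_prop)

theorem graphSegment_nonempty (hℓ : 0 ≤ ℓ) : (graphSegment a b m ℓ).Nonempty :=
  ⟨(a + 0, b + m * 0), 0, le_rfl, hℓ, rfl⟩

theorem exists_abs_sub_le_hausdorffDist_graphSegment {F : Set (ℝ × ℝ)} (hF : Bornology.IsBounded F)
    (hℓ : 0 ≤ ℓ) {p : ℝ × ℝ} (hp : p ∈ F) : ∃ t ∈ Icc 0 ℓ,
      |p.1 - (a + t)| ≤ hausdorffDist F (graphSegment a b m ℓ) ∧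
      |p.2 - (b + m * t)| ≤ hausdorffDist F (graphSegment a b m ℓ) := by
  -- the segment is compact, so the distance to it is attained and the bounds hold with `≤`
  obtain ⟨q, ⟨t, ht0, htℓ, rfl⟩, hq⟩ :=
    isCompact_graphSegment.exists_infDist_eq_dist (graphSegment_nonempty hℓ) p
  have hdist : dist p (a + t, b + m * t) ≤ hausdorffDist F (graphSegment a b m ℓ) :=
    hq ▸ infDist_le_hausdorffDist_of_mem hp (hausdorffEDist_ne_top_of_nonempty_of_bounded
      ⟨p, hp⟩ (graphSegment_nonempty hℓ) hF isCompact_graphSegment.isBounded)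
  rw [Prod.dist_eq, max_le_iff] at hdist
  exact ⟨t, ⟨ht0, htℓ⟩, hdist⟩

theorem abs_lineResidual_le_of_mem {F : Set (ℝ × ℝ)} (hF : Bornology.IsBounded F) (hℓ : 0 ≤ ℓ)
    {p : ℝ × ℝ} (hp : p ∈ F) :
    |lineResidual a b m p.1 p.2| ≤ (1 + |m|) * hausdorffDist F (graphSegment a b m ℓ) := by
  obtain ⟨t, -, hx, hy⟩ := exists_abs_sub_le_hausdorffDist_graphSegment (b := b) (m := m) hF hℓ hp
  rw [show lineResidual a b m p.1 p.2 = (p.2 - (b + m * t)) - m * (p.1 - (a + t)) by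
    unfold lineResidual; ring]
  refine (abs_sub _ _).trans ?_
  rw [abs_mul]
  nlinarith [abs_nonneg m, abs_nonneg (p.1 - (a + t))]

theorem fst_mem_Icc_of_mem {F : Set (ℝ × ℝ)} (hF : Bornology.IsBounded F) (hℓ : 0 ≤ ℓ) {r : ℝ}
    (hr : hausdorffDist F (graphSegment a b m ℓ) ≤ r) {p : ℝ × ℝ} (hp : p ∈ F) :
    p.1 ∈ Icc (a - r) (a + ℓ + r) := by
  obtain ⟨t, ⟨ht0, htℓ⟩, hx, -⟩ := exists_abs_sub_le_hausdorffDist_graphSegment hF hℓ hp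
  constructor <;> linarith [abs_le.mp hx]

end Segment

section FiniteSums

variable {ι : Type*} {s : Finset ι} {x y : ι → ℝ} {a b m : ℝ}

theorem card_mul_sq_le_sum_sq {t : Finset ι} (hts : t ⊆ s) {f : ι → ℝ} {ρ : ℝ} (hρ : 0 ≤ ρ)
    (hf : ∀ i ∈ t, ρ ≤ |f i|) : t.card * ρ ^ 2 ≤ ∑ i ∈ s, f i ^ 2 :=
  calc t.card * ρ ^ 2 = t.card • ρ ^ 2 := (nsmul_eq_mul _ _).symm
    _ ≤ ∑ i ∈ t, f i ^ 2 := Finset.card_nsmul_le_sum _ _ _ fun i hi =>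
        sq_abs (f i) ▸ pow_le_pow_left₀ hρ (hf i hi) 2
    _ ≤ ∑ i ∈ s, f i ^ 2 :=
        Finset.sum_le_sum_of_subset_of_nonneg hts fun _ _ _ => sq_nonneg _

theorem expect_lineResidual (hs : s.Nonempty) :
    𝔼 i ∈ s, lineResidual a b m (x i) (y i) =
      lineResidual a b m (𝔼 i ∈ s, x i) (𝔼 i ∈ s, y i) := by
  simp only [lineResidual, Finset.expect_sub_distrib, ← Finset.mul_expect, Finset.expect_const hs]

theorem abs_lineResidual_expect_le (hs : s.Nonempty) {η : ℝ}
    (hres : ∀ i ∈ s, |lineResidual a b m (x i) (y i)| ≤ η) :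
    |lineResidual a b m (𝔼 i ∈ s, x i) (𝔼 i ∈ s, y i)| ≤ η :=
  expect_lineResidual hs ▸ (Finset.abs_expect_le _ _).trans (Finset.expect_le hs hres)

theorem abs_sum_mul_sub_mul_sum_sq_le {xb yb η C : ℝ}
    (hres : ∀ i ∈ s, |lineResidual xb yb m (x i) (y i)| ≤ η) (hx : ∀ i ∈ s, |x i - xb| ≤ C) :
    |∑ i ∈ s, (y i - yb) * (x i - xb) - m * ∑ i ∈ s, (x i - xb) ^ 2| ≤ s.card * (η * C) := by
  rw [Finset.mul_sum, ← Finset.sum_sub_distrib, ← nsmul_eq_mul]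
  refine (Finset.abs_sum_le_sum_abs _ _).trans (Finset.sum_le_card_nsmul _ _ _ fun i hi => ?_)
  rw [show (y i - yb) * (x i - xb) - m * (x i - xb) ^ 2
      = lineResidual xb yb m (x i) (y i) * (x i - xb) by unfold lineResidual; ring, abs_mul]
  exact mul_le_mul (hres i hi) (hx i hi) (abs_nonneg _) ((abs_nonneg _).trans (hres i hi))

theorem abs_lsSlope_sub_le (hs : s.Nonempty) {c η l u : ℝ} (hc : 0 < c)
    (hS : c * s.card ≤ ∑ i ∈ s, (x i - 𝔼 j ∈ s, x j) ^ 2)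
    (hres : ∀ i ∈ s, |lineResidual a b m (x i) (y i)| ≤ η) (hx : ∀ i ∈ s, x i ∈ Icc l u) :
    |lsSlope s x y - m| ≤ 2 * η * (u - l) / c := by
  have hmean := abs_lineResidual_expect_le hs hres
  have hxb : 𝔼 j ∈ s, x j ∈ Icc l u :=
    ⟨Finset.le_expect hs fun i hi => (hx i hi).1, Finset.expect_le hs fun i hi => (hx i hi).2⟩
  have hres' : ∀ i ∈ s,
      |lineResidual (𝔼 j ∈ s, x j) (𝔼 j ∈ s, y j) m (x i) (y i)| ≤ 2 * η := fun i hi => by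
    rw [← lineResidual_sub_lineResidual a b]
    exact (abs_sub _ _).trans (by linarith [hres i hi])
  have hcov := abs_sum_mul_sub_mul_sum_sq_le (C := u - l) hres' fun i hi =>
    abs_sub_le_iff.mpr ⟨by linarith [(hx i hi).2, hxb.1], by linarith [(hx i hi).1, hxb.2]⟩
  have hS0 : 0 < ∑ i ∈ s, (x i - 𝔼 j ∈ s, x j) ^ 2 :=
    (mul_pos hc (Nat.cast_pos.mpr hs.card_pos)).trans_le hS
  have hE : 0 ≤ 2 * η * (u - l) := by
    have hη : 0 ≤ η := (abs_nonneg _).trans hmean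
    nlinarith [hxb.1, hxb.2]
  rw [lsSlope, div_sub' hS0.ne', abs_div, abs_of_pos hS0, div_le_div_iff₀ hS0 hc, mul_comm _ m]
  nlinarith [mul_le_mul_of_nonneg_left hS hE, mul_le_mul_of_nonneg_left hcov hc.le]

theorem le_abs_sub_of_notMem_box {δ μx μy : ℝ} {x y : ℝ} (hres : |lineResidual μx μy m x y| ≤ δ / 2)
    (hbox : ¬((μx - δ < x ∧ x < μx + δ) ∧ (μy - δ < y ∧ y < μy + δ))) :
    δ / (2 * (1 + |m|)) ≤ |x - μx| := by
  by_contra! hx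
  have hxδ : |x - μx| * (2 * (1 + |m|)) < δ := (lt_div_iff₀ (by positivity)).mp hx
  have hy : |y - μy| < δ := by
    rw [show y - μy = lineResidual μx μy m x y + m * (x - μx) by unfold lineResidual; ring]
    refine (abs_add_le _ _).trans_lt ?_
    rw [abs_mul]
    nlinarith [abs_nonneg m, abs_nonneg (x - μx)]
  have hx' : |x - μx| < δ := by nlinarith [abs_nonneg m, abs_nonneg (x - μx)]
  exact hbox ⟨⟨by linarith [abs_lt.mp hx'], by linarith [abs_lt.mp hx']⟩,
    ⟨by linarith [abs_lt.mp hy], by linarith [abs_lt.mp hy]⟩⟩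

theorem one_sub_mul_card_mul_sq_le_sum_sq_sub_expect
    {μx μy δ q : ℝ} (hδ : 0 ≤ δ) (hμ : lineResidual a b m μx μy = 0)
    (hres : ∀ i ∈ s, |lineResidual a b m (x i) (y i)| ≤ δ / 2)
    (hxb : |𝔼 i ∈ s, x i - μx| ≤ δ / (4 * (1 + |m|)))
    (hq : ((s.filter fun i => (μx - δ < x i ∧ x i < μx + δ) ∧
      (μy - δ < y i ∧ y i < μy + δ)).card : ℝ) ≤ q * s.card) :
    (1 - q) * s.card * (δ / (4 * (1 + |m|))) ^ 2 ≤ ∑ i ∈ s, (x i - 𝔼 j ∈ s, x j) ^ 2 := by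
  set box := fun i => (μx - δ < x i ∧ x i < μx + δ) ∧ (μy - δ < y i ∧ y i < μy + δ)
  have h2ρ : δ / (2 * (1 + |m|)) = 2 * (δ / (4 * (1 + |m|))) := by field_simp; ring
  set ρ := δ / (4 * (1 + |m|))
  have hcard : (1 - q) * s.card ≤ (s.filter fun i => ¬box i).card := by
    have hsplit : ((s.filter box).card : ℝ) + (s.filter fun i => ¬box i).card = s.card := by
      exact_mod_cast Finset.card_filter_add_card_filter_not box
    linarith
  have hfar : ∀ i ∈ s.filter fun i => ¬box i, ρ ≤ |x i - 𝔼 j ∈ s, x j| := by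
    intro i hi
    obtain ⟨his, hout⟩ := Finset.mem_filter.mp hi
    have hres' : |lineResidual μx μy m (x i) (y i)| ≤ δ / 2 := by
      rw [← lineResidual_sub_lineResidual a b, hμ, sub_zero]
      exact hres i his
    have hxμ := h2ρ ▸ le_abs_sub_of_notMem_box hres' hout
    have htri := abs_sub_abs_le_abs_sub (x i - μx) (𝔼 j ∈ s, x j - μx)
    rw [sub_sub_sub_cancel_right] at htri
    linarith
  calc (1 - q) * s.card * ρ ^ 2 ≤ (s.filter fun i => ¬box i).card * ρ ^ 2 :=
        mul_le_mul_of_nonneg_right hcard (sq_nonneg _)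
    _ ≤ ∑ i ∈ s, (x i - 𝔼 j ∈ s, x j) ^ 2 :=
        card_mul_sq_le_sum_sq (Finset.filter_subset _ _) (by positivity) hfar

end FiniteSums

section Sequences

variable {ι : Type*} {s : ℕ → Finset ι} {x y : ℕ → ι → ℝ} {η : ℕ → ℝ} {a b m : ℝ}

theorem lineResidual_eq_zero_of_tendsto_expect (hη : Tendsto η atTop (𝓝 0))
    (hne : ∀ᶠ n in atTop, (s n).Nonempty)
    (hres : ∀ n, ∀ i ∈ s n, |lineResidual a b m (x n i) (y n i)| ≤ η n) {μx μy : ℝ}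
    (hμx : Tendsto (fun n => 𝔼 i ∈ s n, x n i) atTop (𝓝 μx))
    (hμy : Tendsto (fun n => 𝔼 i ∈ s n, y n i) atTop (𝓝 μy)) :
    lineResidual a b m μx μy = 0 := by
  refine tendsto_nhds_unique
    (f := fun n => lineResidual a b m (𝔼 i ∈ s n, x n i) (𝔼 i ∈ s n, y n i))
    ((hμy.sub_const b).sub ((hμx.sub_const a).const_mul m)) (squeeze_zero_norm' ?_ hη)
  filter_upwards [hne] with n hn
  exact abs_lineResidual_expect_le hn (hres n)

theorem exists_pos_mul_card_le_sum_sq_sub_expect (hη : Tendsto η atTop (𝓝 0))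
    (hne : ∀ᶠ n in atTop, (s n).Nonempty)
    (hres : ∀ n, ∀ i ∈ s n, |lineResidual a b m (x n i) (y n i)| ≤ η n) {μx μy δ p : ℝ}
    (hline : lineResidual a b m μx μy = 0)
    (hμx : Tendsto (fun n => 𝔼 i ∈ s n, x n i) atTop (𝓝 μx)) (hδ : 0 < δ) (hp : p < 1)
    (hbox : Tendsto (fun n => ((s n).filter (fun i => (μx - δ < x n i ∧ x n i < μx + δ) ∧
      (μy - δ < y n i ∧ y n i < μy + δ))).card / ((s n).card : ℝ)) atTop (𝓝 p)) :
    ∃ c > 0, ∀ᶠ n in atTop, c * (s n).card ≤ ∑ i ∈ s n, (x n i - 𝔼 j ∈ s n, x n j) ^ 2 := by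
  obtain ⟨q, hpq, hq1⟩ := exists_between hp
  have hρ : 0 < δ / (4 * (1 + |m|)) := by positivity
  refine ⟨(1 - q) * (δ / (4 * (1 + |m|))) ^ 2, mul_pos (sub_pos.mpr hq1) (pow_pos hρ 2), ?_⟩
  filter_upwards [hne, hbox.eventually (gt_mem_nhds hpq), hη.eventually (ge_mem_nhds (half_pos hδ)),
    hμx.eventually (closedBall_mem_nhds μx hρ)] with n hn hqn hηn hxn
  have hbound := one_sub_mul_card_mul_sq_le_sum_sq_sub_expect hδ.le hline
    (fun i hi => (hres n i hi).trans hηn) hxn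
    ((div_lt_iff₀ (Nat.cast_pos.mpr hn.card_pos)).mp hqn).le
  linarith

theorem tendsto_lsSlope (hη : Tendsto η atTop (𝓝 0)) (hne : ∀ᶠ n in atTop, (s n).Nonempty)
    (hres : ∀ n, ∀ i ∈ s n, |lineResidual a b m (x n i) (y n i)| ≤ η n) {l u : ℝ}
    (hx : ∀ᶠ n in atTop, ∀ i ∈ s n, x n i ∈ Icc l u)
    (hlow : ∃ c > 0, ∀ᶠ n in atTop, c * (s n).card ≤ ∑ i ∈ s n, (x n i - 𝔼 j ∈ s n, x n j) ^ 2) :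
    Tendsto (fun n => lsSlope (s n) (x n) (y n)) atTop (𝓝 m) := by
  obtain ⟨c, hc, hlow⟩ := hlow
  refine tendsto_sub_nhds_zero_iff.mp (squeeze_zero_norm' ?_ (?_ : Tendsto
    (fun n => 2 * η n * (u - l) / c) atTop (𝓝 0)))
  · filter_upwards [hne, hx, hlow] with n hn hxn hlown
    exact abs_lsSlope_sub_le hn hc hlown (hres n) hxn
  · simpa using ((hη.const_mul 2).mul_const (u - l)).div_const c

end Sequences

theorem isBounded_setOf_exists_Icc (k : ℕ) (x y : ℕ → ℝ) :
    Bornology.IsBounded {p : ℝ × ℝ | ∃ i : ℕ, 1 ≤ i ∧ i ≤ k ∧ p = (x i, y i)} :=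
  ((Finset.Icc 1 k).finite_toSet.image fun i => (x i, y i)).isBounded.subset
    (by rintro _ ⟨i, h1, h2, rfl⟩; exact ⟨i, by simp [h1, h2], rfl⟩)

theorem lsSlope_tendsto_of_hausdorff_tendsto_means_general
    (k : ℕ → ℕ) (x y : ℕ → ℕ → ℝ) (xb yb : ℕ → ℝ)
    (m a b ℓ μx μy : ℝ) (hℓ : 0 < ℓ)
    (hk : Tendsto k atTop atTop)
    (hxb : ∀ n, xb n = (∑ i ∈ Finset.Icc 1 (k n), x n i) / (k n : ℝ))
    (hyb : ∀ n, yb n = (∑ i ∈ Finset.Icc 1 (k n), y n i) / (k n : ℝ))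
    (hμx : Tendsto xb atTop (nhds μx)) (hμy : Tendsto yb atTop (nhds μy))
    (hconv : Tendsto (fun n => Metric.hausdorffDist
        {p : ℝ × ℝ | ∃ i : ℕ, 1 ≤ i ∧ i ≤ k n ∧ p = (x n i, y n i)}
        {p : ℝ × ℝ | ∃ t : ℝ, 0 ≤ t ∧ t ≤ ℓ ∧ p = (a + t, b + m * t)})
      atTop (nhds 0))
    (δ : ℝ) (hδ : 0 < δ) (pδ : ℝ) (hpδ1 : pδ < 1)
    (hbox : Tendsto (fun n =>
        (((Finset.Icc 1 (k n)).filter (fun i =>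
          (μx - δ < x n i ∧ x n i < μx + δ) ∧
          (μy - δ < y n i ∧ y n i < μy + δ))).card : ℝ) / (k n : ℝ))
      atTop (nhds pδ)) :
    (∀ᶠ n in atTop, ∑ i ∈ Finset.Icc 1 (k n), (x n i - xb n) ^ 2 ≠ 0) ∧
    Tendsto (fun n =>
        (∑ i ∈ Finset.Icc 1 (k n), (y n i - yb n) * (x n i - xb n)) /
        (∑ i ∈ Finset.Icc 1 (k n), (x n i - xb n) ^ 2))
      atTop (nhds m) := by
  change Tendsto (fun n => hausdorffDist _ (graphSegment a b m ℓ)) atTop (𝓝 0) at hconv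
  have hcard (n : ℕ) : ((Finset.Icc 1 (k n)).card : ℝ) = k n := by simp
  obtain rfl : xb = fun n => 𝔼 i ∈ Finset.Icc 1 (k n), x n i :=
    funext fun n => by rw [hxb, Finset.expect_eq_sum_div_card, hcard]
  obtain rfl : yb = fun n => 𝔼 i ∈ Finset.Icc 1 (k n), y n i :=
    funext fun n => by rw [hyb, Finset.expect_eq_sum_div_card, hcard]
  have hmem (n : ℕ) {i : ℕ} (hi : i ∈ Finset.Icc 1 (k n)) :
      (x n i, y n i) ∈ {p : ℝ × ℝ | ∃ i : ℕ, 1 ≤ i ∧ i ≤ k n ∧ p = (x n i, y n i)} :=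
    ⟨i, (Finset.mem_Icc.mp hi).1, (Finset.mem_Icc.mp hi).2, rfl⟩
  have hres (n : ℕ) : ∀ i ∈ Finset.Icc 1 (k n), |lineResidual a b m (x n i) (y n i)| ≤
      (1 + |m|) * hausdorffDist {p : ℝ × ℝ | ∃ i : ℕ, 1 ≤ i ∧ i ≤ k n ∧ p = (x n i, y n i)}
        (graphSegment a b m ℓ) := fun i hi =>
    abs_lineResidual_le_of_mem (isBounded_setOf_exists_Icc _ _ _) hℓ.le (hmem n hi)
  have hη := by simpa using hconv.const_mul (1 + |m|)
  have hne : ∀ᶠ n in atTop, (Finset.Icc 1 (k n)).Nonempty :=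
    (hk.eventually_gt_atTop 0).mono fun n hn => Finset.nonempty_Icc.mpr hn
  have hx : ∀ᶠ n in atTop, ∀ i ∈ Finset.Icc 1 (k n), x n i ∈ Icc (a - 1) (a + ℓ + 1) :=
    (hconv.eventually (ge_mem_nhds one_pos)).mono fun n hn _ hi =>
      fst_mem_Icc_of_mem (isBounded_setOf_exists_Icc _ _ _) hℓ.le hn (hmem n hi)
  have hline := lineResidual_eq_zero_of_tendsto_expect hη hne hres hμx hμy
  obtain ⟨c, hc, hlow⟩ := exists_pos_mul_card_le_sum_sq_sub_expect hη hne hres hline hμx hδ hpδ1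
    (by simpa using hbox)
  refine ⟨(hne.and hlow).mono fun n ⟨hn, hl⟩ =>
    ((mul_pos hc (Nat.cast_pos.mpr hn.card_pos)).trans_le hl).ne', ?_⟩
  exact tendsto_lsSlope hη hne hres hx ⟨c, hc, hlow⟩

/-- Suppose the finite point sets
`F n = {(x n i, y n i) : 1 ≤ i ≤ k n}` (with `k n → ∞` distinct points) converge in the
Hausdorff metric to a bounded closed line segment of positive length and finite slope
`m`, the coordinate means converge, `x̄ₙ → μx` and `ȳₙ → μy`, and for some `δ > 0` the
proportion of points of `F n` in the box `(μx - δ, μx + δ) × (μy - δ, μy + δ)`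
converges to some `p < 1`. Then the least squares slope through `F n` is well defined
for all large `n` and converges to `m`. -/
theorem lsSlope_tendsto_of_hausdorff_tendsto_means
    (k : ℕ → ℕ) (x y : ℕ → ℕ → ℝ) (xb yb : ℕ → ℝ)
    (m a b ℓ μx μy : ℝ) (hℓ : 0 < ℓ)
    (hk : Tendsto k atTop atTop)
    (hdistinct : ∀ n, Set.InjOn (fun i => (x n i, y n i)) (Set.Icc 1 (k n)))
    (hxb : ∀ n, xb n = (∑ i ∈ Finset.Icc 1 (k n), x n i) / (k n : ℝ))
    (hyb : ∀ n, yb n = (∑ i ∈ Finset.Icc 1 (k n), y n i) / (k n : ℝ))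
    (hμx : Tendsto xb atTop (nhds μx)) (hμy : Tendsto yb atTop (nhds μy))
    (hconv : Tendsto (fun n => Metric.hausdorffDist
        {p : ℝ × ℝ | ∃ i : ℕ, 1 ≤ i ∧ i ≤ k n ∧ p = (x n i, y n i)}
        {p : ℝ × ℝ | ∃ t : ℝ, 0 ≤ t ∧ t ≤ ℓ ∧ p = (a + t, b + m * t)})
      atTop (nhds 0))
    (δ : ℝ) (hδ : 0 < δ) (pδ : ℝ) (hpδ0 : 0 ≤ pδ) (hpδ1 : pδ < 1)
    (hbox : Tendsto (fun n =>
        (((Finset.Icc 1 (k n)).filter (fun i =>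
          (μx - δ < x n i ∧ x n i < μx + δ) ∧
          (μy - δ < y n i ∧ y n i < μy + δ))).card : ℝ) / (k n : ℝ))
      atTop (nhds pδ)) :
    (∀ᶠ n in atTop, ∑ i ∈ Finset.Icc 1 (k n), (x n i - xb n) ^ 2 ≠ 0) ∧
    Tendsto (fun n =>
        (∑ i ∈ Finset.Icc 1 (k n), (y n i - yb n) * (x n i - xb n)) /
        (∑ i ∈ Finset.Icc 1 (k n), (x n i - xb n) ^ 2))
      atTop (nhds m) :=
  lsSlope_tendsto_of_hausdorff_tendsto_means_general k x y xb yb m a b ℓ μx μy hℓ hk hxb hyb hμx hμy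
    hconv δ hδ pδ hpδ1 hbox
end

section
/- Let $X_1, X_2, \ldots$ be iid nonnegative random variables with distribution function $F$ whose tail is regularly varying with index $-\alpha$ ($\alpha > 0$), and let $X_{(1)} \ge \cdots \ge X_{(n)}$ be the order statistics of the first $n$ in decreasing order. Let $k = k(n) \to \infty$ with $k/n \to 0$, and fix $M > 0$. Define $k^M := \#\{j : 1 \le j \le k,\ j \ge k e^{-M},\ \log(X_{(j)}/X_{(k)}) \le 2M/\alpha\}$ (the number of points of the normalized QQ plot lying in $[0,M] \times [0, 2M/\alpha]$). Then $k^M / k$ converges in probability to $1 - e^{-M}$ as $n \to \infty$. -/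
open MeasureTheory Filter Set ProbabilityTheory

/-- `ord n j ω` (for `1 ≤ j ≤ n`) is the `j`-th largest among `X 1 ω, …, X n ω`:
decreasing in `j`, and a rearrangement of the first `n` sample values. -/

def IsDecOrderStat {Ω : Type*} (X : ℕ → Ω → ℝ) (ord : ℕ → ℕ → Ω → ℝ) : Prop :=
  ∀ ω n, (∀ i j, 1 ≤ i → i ≤ j → j ≤ n → ord n j ω ≤ ord n i ω) ∧
    ∃ σ : Equiv.Perm (Fin n), ∀ i : Fin n, ord n (i.1 + 1) ω = X ((σ i).1 + 1) ω

/-- The distribution function `F` has a regularly varying tail with index `-α`: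
`1 - F(x) = x^{-α} L(x)` with `L` slowly varying. -/

def RegVaryingTail (F : ℝ → ℝ) (α : ℝ) : Prop :=
  ∃ L : ℝ → ℝ, (∀ x > (0:ℝ), 1 - F x = x ^ (-α) * L x) ∧
    ∀ x > (0:ℝ), Tendsto (fun t => L (t * x) / L t) atTop (nhds 1)

/-! Let `b n` be a `k n / n`-quantile of the tail `1 - F`; regular variation upgrades this to
`n (1 - F (b n * x)) / k n → x ^ (-α)` for every `x > 0`. With `x₁ = e^{-M/(2α)}`, about
`e^{M/2} k` sample points exceed `b n * x₁` and about `e^{-3M/2} k` exceed `b n * x₁ * e^{2M/α}`,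
and by Chebyshev's inequality both counts are, with probability tending to one, on the right side
of `k` and `k e^{-M}` respectively. On that event `X_(k) > b n * x₁` and
`X_(j) ≤ b n * x₁ * e^{2M/α}` for every `j ≥ k e^{-M}`, so the logarithmic constraint holds for
all `j ∈ [k e^{-M}, k]`, and `kᴹ` is the deterministic count `#{j ≤ k | j ≥ k e^{-M}}`,
which is `k (1 - e^{-M}) + O(1)`. -/

open scoped Finset Topology

section OrderStatistics

variable {Ω : Type*}

noncomputable def exceedCount (X : ℕ → Ω → ℝ) (n : ℕ) (b : ℝ) (ω : Ω) : ℕ :=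
  #{i ∈ Finset.Icc 1 n | b < X i ω}

lemma card_filter_Icc_one_eq_card_filter_fin (n : ℕ) (P : ℕ → Prop) [DecidablePred P] :
    #{i ∈ Finset.Icc 1 n | P i} = #{i : Fin n | P (i + 1)} := by
  rw [Finset.card_filter, Finset.card_filter,
    Fin.sum_univ_eq_sum_range (fun i => if P (i + 1) then 1 else 0), Finset.range_eq_Ico,
    Finset.sum_Ico_add' (fun j => if P j then 1 else 0)]
  rfl

variable {X : ℕ → Ω → ℝ} {ord : ℕ → ℕ → Ω → ℝ}

lemma IsDecOrderStat.exceedCount_eq (hord : IsDecOrderStat X ord) (n : ℕ) (b : ℝ) (ω : Ω) :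
    exceedCount (ord n) n b ω = exceedCount X n b ω := by
  obtain ⟨σ, hσ⟩ := (hord ω n).2
  rw [exceedCount, exceedCount, card_filter_Icc_one_eq_card_filter_fin,
    card_filter_Icc_one_eq_card_filter_fin, Finset.card_filter, Finset.card_filter]
  simp only [hσ]
  exact Equiv.sum_comp σ (fun i : Fin n => if b < X (i + 1) ω then 1 else 0)

lemma IsDecOrderStat.lt_iff_le_exceedCount (hord : IsDecOrderStat X ord) {ω : Ω} {n j : ℕ}
    (hj : 1 ≤ j) (hjn : j ≤ n) (b : ℝ) :
    b < ord n j ω ↔ j ≤ exceedCount X n b ω := by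
  rw [← hord.exceedCount_eq, exceedCount]
  constructor
  · intro h
    calc j = #(Finset.Icc 1 j) := by simp
      _ ≤ _ := Finset.card_le_card fun i hi => by
        simp only [Finset.mem_Icc] at hi
        simp only [Finset.mem_filter, Finset.mem_Icc]
        exact ⟨⟨hi.1, hi.2.trans hjn⟩, h.trans_le ((hord ω n).1 i j hi.1 hi.2 hjn)⟩
  · intro h
    by_contra! hle
    have hsub : {i ∈ Finset.Icc 1 n | b < ord n i ω} ⊆ Finset.Icc 1 (j - 1) := fun i hi => by
      simp only [Finset.mem_filter, Finset.mem_Icc] at hi ⊢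
      refine ⟨hi.1.1, Nat.le_sub_one_of_lt (lt_of_not_ge fun hji => ?_)⟩
      exact (hi.2.trans_le ((hord ω n).1 j i hj hji hi.1.2)).not_ge hle
    have := Finset.card_le_card hsub
    simp only [Nat.card_Icc] at this
    omega

lemma IsDecOrderStat.card_filter_log_div_le_eq (hord : IsDecOrderStat X ord) {n K : ℕ} {ω : Ω}
    {b r s : ℝ} (hKn : K ≤ n) (hb : 0 < b) (hK : K ≤ exceedCount X n b ω)
    (hr : (exceedCount X n (b * Real.exp s) ω : ℝ) < r) :
    ((Finset.Icc 1 K).filter fun j : ℕ => r ≤ j ∧ Real.log (ord n j ω / ord n K ω) ≤ s).card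
      = ((Finset.Icc 1 K).filter fun j : ℕ => r ≤ j).card := by
  refine congrArg Finset.card (Finset.filter_congr fun j hj => and_iff_left_of_imp fun hrj => ?_)
  obtain ⟨hj1, hjK⟩ := Finset.mem_Icc.1 hj
  have hbK : b < ord n K ω := (hord.lt_iff_le_exceedCount (hj1.trans hjK) hKn b).2 hK
  have hjb : ord n j ω ≤ b * Real.exp s := le_of_not_gt fun h => by
    have := (hord.lt_iff_le_exceedCount hj1 (hjK.trans hKn) _).1 h
    have : (j : ℝ) ≤ exceedCount X n (b * Real.exp s) ω := by exact_mod_cast this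
    linarith
  have hKj : ord n K ω ≤ ord n j ω := (hord ω n).1 j K hj1 hjK hKn
  have hK0 : 0 < ord n K ω := hb.trans hbK
  rw [Real.log_le_iff_le_exp (div_pos (hK0.trans_le hKj) hK0), div_le_iff₀ hK0]
  calc ord n j ω ≤ b * Real.exp s := hjb
    _ ≤ Real.exp s * ord n K ω := by rw [mul_comm]; gcongr

end OrderStatistics

lemma card_filter_mul_le_eq {K : ℕ} (hK : 0 < K) {c : ℝ} (hc0 : 0 < c) (hc1 : c ≤ 1) :
    (((Finset.Icc 1 K).filter fun j : ℕ => (K : ℝ) * c ≤ j).card : ℝ)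
      = K + 1 - ⌈(K : ℝ) * c⌉₊ := by
  have hfilter : ((Finset.Icc 1 K).filter fun j : ℕ => (K : ℝ) * c ≤ j)
      = Finset.Icc ⌈(K : ℝ) * c⌉₊ K := by
    ext j
    simp only [Finset.mem_filter, Finset.mem_Icc, Nat.ceil_le]
    constructor
    · rintro ⟨⟨-, hjK⟩, hj⟩
      exact ⟨hj, hjK⟩
    · rintro ⟨hj, hjK⟩
      exact ⟨⟨Nat.cast_pos.1 ((by positivity : (0 : ℝ) < K * c).trans_le hj), hjK⟩, hj⟩
  have hceil : ⌈(K : ℝ) * c⌉₊ ≤ K + 1 :=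
    (Nat.ceil_le.2 (mul_le_of_le_one_right (Nat.cast_nonneg K) hc1)).trans K.le_succ
  rw [hfilter, Nat.card_Icc, Nat.cast_sub hceil]
  push_cast
  ring

lemma tendsto_card_filter_mul_le_div {c : ℝ} (hc0 : 0 < c) (hc1 : c ≤ 1) :
    Tendsto (fun K : ℕ => (((Finset.Icc 1 K).filter fun j : ℕ => (K : ℝ) * c ≤ j).card : ℝ) / K)
      atTop (𝓝 (1 - c)) := by
  have hupper : Tendsto (fun K : ℕ => 1 - c + 1 / (K : ℝ)) atTop (𝓝 (1 - c)) := by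
    simpa using tendsto_one_div_atTop_nhds_zero_nat.const_add (1 - c)
  refine tendsto_of_tendsto_of_tendsto_of_le_of_le' tendsto_const_nhds hupper ?_ ?_ <;>
    filter_upwards [eventually_gt_atTop 0] with K hK <;>
    have hK0 : (0 : ℝ) < K := Nat.cast_pos.2 hK
  · rw [le_div_iff₀ hK0, card_filter_mul_le_eq hK hc0 hc1]
    linarith [Nat.ceil_lt_add_one (by positivity : (0 : ℝ) ≤ K * c)]
  · rw [div_le_iff₀ hK0, card_filter_mul_le_eq hK hc0 hc1, add_mul, one_div_mul_cancel hK0.ne']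
    linarith [Nat.le_ceil ((K : ℝ) * c)]

section Exceedances

variable {Ω : Type*} [MeasurableSpace Ω] {μ : Measure Ω} [IsProbabilityMeasure μ]

lemma variance_indicator_one_le {s : Set Ω} (hs : MeasurableSet s) :
    variance (s.indicator 1) μ ≤ μ.real s := by
  calc variance (s.indicator 1) μ ≤ μ[s.indicator 1 ^ 2] :=
        variance_le_expectation_sq (measurable_one.indicator hs).aestronglyMeasurable
    _ = μ.real s := by
        rw [← integral_indicator_one hs]
        congr 1
        ext ω
        by_cases h : ω ∈ s <;> simp [h]

lemma measureReal_lt_eq_one_sub {Y : Ω → ℝ} {F : ℝ → ℝ} (hY : Measurable Y)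
    (hF : ∀ x, (μ {ω | Y ω ≤ x}).toReal = F x) (b : ℝ) :
    μ.real {ω | b < Y ω} = 1 - F b := by
  have hs : MeasurableSet {ω | Y ω ≤ b} := hY measurableSet_Iic
  rw [← hF b, ← measureReal_def, ← probReal_compl_eq_one_sub hs]
  simp [Set.compl_ofPred]

variable {X : ℕ → Ω → ℝ} {F : ℝ → ℝ}

/-- Chebyshev's inequality: `exceedCount X n b` is binomial with parameters `n` and `1 - F b`. -/

lemma measure_le_abs_exceedCount_sub_le (hX : ∀ i, Measurable (X i)) (hindep : iIndepFun X μ)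
    (hF : ∀ i x, (μ {ω | X i ω ≤ x}).toReal = F x) (n : ℕ) (b : ℝ) {a : ℝ} (ha : 0 < a) :
    μ {ω | a ≤ |(exceedCount X n b ω : ℝ) - n * (1 - F b)|}
      ≤ ENNReal.ofReal (n * (1 - F b) / a ^ 2) := by
  set A : ℕ → Set Ω := fun i => {ω | b < X i ω}
  have hA : ∀ i, MeasurableSet (A i) := fun i => hX i measurableSet_Ioi
  set Y : ℕ → Ω → ℝ := fun i => (A i).indicator 1
  have hY : ∀ i, MemLp (Y i) 2 μ := fun i => memLp_indicator_const 2 (hA i) 1 (by simp)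
  have hsum : ∀ ω, (exceedCount X n b ω : ℝ) = (∑ i ∈ Finset.Icc 1 n, Y i) ω := by
    intro ω
    simp [exceedCount, Finset.sum_apply, Y, A, Set.indicator_apply, Finset.sum_boole]
  have hmean : μ[∑ i ∈ Finset.Icc 1 n, Y i] = n * (1 - F b) := by
    simp only [Finset.sum_apply]
    rw [integral_finsetSum _ fun i _ => (hY i).integrable one_le_two]
    simp [Y, integral_indicator_one (hA _), A, measureReal_lt_eq_one_sub (hX _) (hF _), mul_sub]
  have hvar : variance (∑ i ∈ Finset.Icc 1 n, Y i) μ ≤ n * (1 - F b) := by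
    have hYindep : iIndepFun Y μ :=
      hindep.comp (fun _ => (Set.Ioi b).indicator 1) fun _ =>
        measurable_one.indicator measurableSet_Ioi
    rw [IndepFun.variance_sum (fun i _ => hY i) fun i _ j _ hij => hYindep.indepFun hij]
    calc ∑ i ∈ Finset.Icc 1 n, variance (Y i) μ ≤ ∑ i ∈ Finset.Icc 1 n, (1 - F b) :=
          Finset.sum_le_sum fun i _ => (variance_indicator_one_le (hA i)).trans_eq
            (measureReal_lt_eq_one_sub (hX i) (hF i) b)
      _ = n * (1 - F b) := by simp [mul_sub]
  calc μ {ω | a ≤ |(exceedCount X n b ω : ℝ) - n * (1 - F b)|}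
      = μ {ω | a ≤ |(∑ i ∈ Finset.Icc 1 n, Y i) ω - μ[∑ i ∈ Finset.Icc 1 n, Y i]|} := by
        simp only [hsum, hmean]
    _ ≤ ENNReal.ofReal (variance (∑ i ∈ Finset.Icc 1 n, Y i) μ / a ^ 2) :=
        meas_ge_le_variance_div_sq (memLp_finsetSum' _ fun i _ => hY i) ha
    _ ≤ ENNReal.ofReal (n * (1 - F b) / a ^ 2) := by gcongr

end Exceedances

section ExceedanceTails

variable {Ω : Type*} [MeasurableSpace Ω] {μ : Measure Ω} [IsProbabilityMeasure μ]
  {X : ℕ → Ω → ℝ} {F : ℝ → ℝ} {b m : ℕ → ℝ} {c : ℝ}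

lemma tendsto_measure_le_abs_exceedCount_sub (hX : ∀ i, Measurable (X i))
    (hindep : iIndepFun X μ) (hF : ∀ i x, (μ {ω | X i ω ≤ x}).toReal = F x)
    (hm : Tendsto m atTop atTop) (hmean : Tendsto (fun n => n * (1 - F (b n)) / m n) atTop (𝓝 c))
    {ε : ℝ} (hε : 0 < ε) :
    Tendsto (fun n => μ {ω | ε * m n ≤ |(exceedCount X n (b n) ω : ℝ) - n * (1 - F (b n))|})
      atTop (𝓝 0) := by
  have hbound : Tendsto (fun n => n * (1 - F (b n)) / m n / (ε ^ 2 * m n)) atTop (𝓝 0) :=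
    hmean.div_atTop (hm.const_mul_atTop (by positivity))
  refine tendsto_nhds_bot_mono (by simpa using ENNReal.tendsto_ofReal hbound) ?_
  filter_upwards [hm.eventually_gt_atTop 0] with n hn
  refine (measure_le_abs_exceedCount_sub_le hX hindep hF n (b n) (by positivity)).trans_eq ?_
  congr 1
  field_simp

lemma tendsto_measure_exceedCount_lt (hX : ∀ i, Measurable (X i))
    (hindep : iIndepFun X μ) (hF : ∀ i x, (μ {ω | X i ω ≤ x}).toReal = F x)
    (hm : Tendsto m atTop atTop) (hmean : Tendsto (fun n => n * (1 - F (b n)) / m n) atTop (𝓝 c))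
    (hc : 1 < c) :
    Tendsto (fun n => μ {ω | (exceedCount X n (b n) ω : ℝ) < m n}) atTop (𝓝 0) := by
  refine tendsto_nhds_bot_mono (tendsto_measure_le_abs_exceedCount_sub hX hindep hF hm hmean
    (by linarith : 0 < (c - 1) / 2)) ?_
  filter_upwards [hm.eventually_gt_atTop 0,
    hmean.eventually_const_lt (by linarith : (c + 1) / 2 < c)] with n hn hlarge
  refine measure_mono fun ω hω => ?_
  rw [lt_div_iff₀ hn] at hlarge
  rw [Set.mem_ofPred_eq] at hω ⊢
  rw [abs_sub_comm]
  exact (le_abs_self _).trans' (by linarith)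

lemma tendsto_measure_le_exceedCount (hX : ∀ i, Measurable (X i))
    (hindep : iIndepFun X μ) (hF : ∀ i x, (μ {ω | X i ω ≤ x}).toReal = F x)
    (hm : Tendsto m atTop atTop) (hmean : Tendsto (fun n => n * (1 - F (b n)) / m n) atTop (𝓝 c))
    (hc : c < 1) :
    Tendsto (fun n => μ {ω | m n ≤ exceedCount X n (b n) ω}) atTop (𝓝 0) := by
  refine tendsto_nhds_bot_mono (tendsto_measure_le_abs_exceedCount_sub hX hindep hF hm hmean
    (by linarith : 0 < (1 - c) / 2)) ?_
  filter_upwards [hm.eventually_gt_atTop 0,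
    hmean.eventually_lt_const (by linarith : c < (c + 1) / 2)] with n hn hsmall
  refine measure_mono fun ω hω => ?_
  rw [div_lt_iff₀ hn] at hsmall
  rw [Set.mem_ofPred_eq] at hω ⊢
  exact (le_abs_self _).trans' (by linarith)

end ExceedanceTails

lemma tendsto_measure_lt_abs_sub_of_tendsto_measure_ne {Ω ι : Type*} [MeasurableSpace Ω]
    {μ : Measure Ω} {l : Filter ι} {Z : ι → Ω → ℝ} {z : ι → ℝ} {c : ℝ} (hz : Tendsto z l (𝓝 c))
    (hne : Tendsto (fun i => μ {ω | Z i ω ≠ z i}) l (𝓝 0)) {η : ℝ} (hη : 0 < η) :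
    Tendsto (fun i => μ {ω | η < |Z i ω - c|}) l (𝓝 0) := by
  refine tendsto_nhds_bot_mono hne ?_
  filter_upwards [Metric.tendsto_nhds.1 hz η hη] with i hi
  refine measure_mono fun ω (hω : η < _) (heq : Z i ω = z i) => ?_
  rw [heq, ← Real.dist_eq] at hω
  exact hω.not_gt hi

section TailQuantile

def IsTailQuantile (R : ℝ → ℝ) (T b : ℝ) : Prop :=
  (∀ y < b, T ≤ R y) ∧ ∀ y > b, R y < T

variable {ι : Type*} {l : Filter ι} {R : ℝ → ℝ}

lemma Antitone.exists_isTailQuantile (hR : Antitone R) (hpos : ∀ x, 0 < R x)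
    (hlim : Tendsto R atTop (𝓝 0)) {T : ι → ℝ} (hT : Tendsto T l (𝓝[>] 0)) :
    ∃ b : ι → ℝ, Tendsto b l atTop ∧ ∀ᶠ i in l, IsTailQuantile R (T i) (b i) := by
  have hne : ∀ᶠ i in l, {x | R x < T i}.Nonempty :=
    (tendsto_nhdsWithin_iff.1 hT).2.mono fun i hi => (hlim.eventually_lt_const hi).exists
  have hle : ∀ A, ∀ᶠ i in l, ∀ x ∈ {x | R x < T i}, A ≤ x := fun A =>
    ((tendsto_nhdsWithin_iff.1 hT).1.eventually_lt_const (hpos A)).mono fun i hi x hx =>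
      le_of_not_gt fun hxA => (hi.trans_le (hR hxA.le)).not_gt hx
  refine ⟨fun i => sInf {x | R x < T i}, tendsto_atTop.2 fun A => ?_, ?_⟩
  · filter_upwards [hne, hle A] with i hi hA using le_csInf hi hA
  · filter_upwards [hne, hle 0] with i hi h0
    refine ⟨fun y hy => le_of_not_gt fun hRy => (csInf_le ⟨0, h0⟩ hRy).not_gt hy, fun y hy => ?_⟩
    obtain ⟨x, hx, hxy⟩ := exists_lt_of_csInf_lt hi hy
    exact (hR hxy.le).trans_lt hx

end TailQuantile

namespace RegVaryingTail

variable {F : ℝ → ℝ} {α : ℝ}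

lemma tendsto_div (hrv : RegVaryingTail F α) {x : ℝ} (hx : 0 < x) :
    Tendsto (fun t => (1 - F (t * x)) / (1 - F t)) atTop (𝓝 (x ^ (-α))) := by
  obtain ⟨L, hFL, hL⟩ := hrv
  have := (hL x hx).const_mul (x ^ (-α))
  rw [mul_one] at this
  refine this.congr' ?_
  filter_upwards [eventually_gt_atTop 0] with t ht
  rw [hFL _ (mul_pos ht hx), hFL t ht, Real.mul_rpow ht.le hx.le, mul_comm (t ^ (-α)),
    mul_assoc, mul_div_assoc, mul_div_mul_left _ _ (Real.rpow_pos_of_pos ht _).ne']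

lemma eventually_ne (hrv : RegVaryingTail F α) : ∀ᶠ t in atTop, 1 - F t ≠ 0 := by
  filter_upwards [(hrv.tendsto_div one_pos).eventually_ne (by simp : (1 : ℝ) ^ (-α) ≠ 0)]
    with t ht h0
  simp [h0] at ht

lemma lt_one (hrv : RegVaryingTail F α) (hF : Monotone F) (hF1 : ∀ x, F x ≤ 1) (x : ℝ) :
    F x < 1 := by
  obtain ⟨t, ht⟩ := (hrv.eventually_ne.and (eventually_ge_atTop x)).exists
  exact (hF ht.2).trans_lt (lt_of_le_of_ne (hF1 t) (sub_ne_zero.1 ht.1).symm)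

variable {ι : Type*} {l : Filter ι} {b T : ι → ℝ}

lemma tendsto_div_mul (hrv : RegVaryingTail F α) (hb : Tendsto b l atTop) {x y : ℝ}
    (hx : 0 < x) (hy : 0 < y) :
    Tendsto (fun i => (1 - F (b i * x)) / (1 - F (b i * y))) l (𝓝 ((x / y) ^ (-α))) :=
  ((hrv.tendsto_div (div_pos hx hy)).comp (hb.atTop_mul_const hy)).congr fun i => by
    simp only [Function.comp_apply, mul_assoc, mul_div_cancel₀ x hy.ne']

lemma eventually_lt_div_of_isTailQuantile (hrv : RegVaryingTail F α) (hF1 : ∀ x, F x < 1)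
    (hb : Tendsto b l atTop) (hq : ∀ᶠ i in l, IsTailQuantile (fun x => 1 - F x) (T i) (b i))
    {x y c : ℝ} (hx : 0 < x) (hy : 0 < y) (hy1 : y < 1) (hc : c < (x / y) ^ (-α)) :
    ∀ᶠ i in l, c < (1 - F (b i * x)) / T i := by
  filter_upwards [hb.eventually_gt_atTop 0, hq,
    (hrv.tendsto_div_mul hb hx hy).eventually_const_lt hc] with i hbi hqi hci
  have hTle : T i ≤ 1 - F (b i * y) := hqi.1 _ (mul_lt_of_lt_one_right hbi hy1)
  have hT : 0 < T i := (sub_pos.2 (hF1 _)).trans (hqi.2 (b i + 1) (lt_add_one _))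
  exact hci.trans_le (div_le_div_of_nonneg_left (sub_pos.2 (hF1 _)).le hT hTle)

lemma eventually_div_lt_of_isTailQuantile (hrv : RegVaryingTail F α) (hF1 : ∀ x, F x < 1)
    (hb : Tendsto b l atTop) (hq : ∀ᶠ i in l, IsTailQuantile (fun x => 1 - F x) (T i) (b i))
    {x y c : ℝ} (hx : 0 < x) (hy1 : 1 < y) (hc : (x / y) ^ (-α) < c) :
    ∀ᶠ i in l, (1 - F (b i * x)) / T i < c := by
  filter_upwards [hb.eventually_gt_atTop 0, hq,
    (hrv.tendsto_div_mul hb hx (zero_lt_one.trans hy1)).eventually_lt_const hc] with i hbi hqi hci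
  have hlt : 1 - F (b i * y) < T i := hqi.2 _ (lt_mul_of_one_lt_right hbi hy1)
  exact (div_le_div_of_nonneg_left (sub_pos.2 (hF1 _)).le (sub_pos.2 (hF1 _)) hlt.le).trans_lt hci

lemma tendsto_div_of_isTailQuantile (hrv : RegVaryingTail F α) (hF1 : ∀ x, F x < 1)
    (hb : Tendsto b l atTop) (hq : ∀ᶠ i in l, IsTailQuantile (fun x => 1 - F x) (T i) (b i))
    {x : ℝ} (hx : 0 < x) :
    Tendsto (fun i => (1 - F (b i * x)) / T i) l (𝓝 (x ^ (-α))) := by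
  have hcont : Tendsto (fun y => (x / y) ^ (-α)) (𝓝 1) (𝓝 (x ^ (-α))) := by
    simpa using ((tendsto_const_nhds (x := x)).div tendsto_id one_ne_zero).rpow_const
      (Or.inl (by positivity : x / 1 ≠ 0))
  refine tendsto_order.2 ⟨fun c hc => ?_, fun c hc => ?_⟩
  · obtain ⟨y, hcy, hy⟩ := ((hcont.mono_left nhdsWithin_le_nhds).eventually
      (lt_mem_nhds hc)).and (Ioo_mem_nhdsLT zero_lt_one) |>.exists
    exact hrv.eventually_lt_div_of_isTailQuantile hF1 hb hq hx hy.1 hy.2 hcy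
  · obtain ⟨y, hcy, hy⟩ := ((hcont.mono_left nhdsWithin_le_nhds).eventually
      (gt_mem_nhds hc)).and (self_mem_nhdsWithin (s := Ioi 1)) |>.exists
    exact hrv.eventually_div_lt_of_isTailQuantile hF1 hb hq hx hy hcy

lemma exists_tendsto_div {ν : Measure ℝ} [IsProbabilityMeasure ν] (hrv : RegVaryingTail F α)
    (hF : ⇑(cdf ν) = F) (hT : Tendsto T l (𝓝[>] 0)) :
    ∃ b : ι → ℝ, Tendsto b l atTop ∧
      ∀ x > 0, Tendsto (fun i => (1 - F (b i * x)) / T i) l (𝓝 (x ^ (-α))) := by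
  have hmono : Monotone F := hF ▸ monotone_cdf ν
  have htop : Tendsto F atTop (𝓝 1) := hF ▸ tendsto_cdf_atTop ν
  have hlt := hrv.lt_one hmono (hF ▸ cdf_le_one ν)
  obtain ⟨b, hb, hq⟩ := Antitone.exists_isTailQuantile (R := fun x => 1 - F x)
    (fun _ _ hxy => sub_le_sub_left (hmono hxy) 1) (fun x => sub_pos.2 (hlt x))
    (by simpa using htop.const_sub 1) hT
  exact ⟨b, hb, fun x hx => hrv.tendsto_div_of_isTailQuantile hlt hb hq hx⟩

lemma exists_tendsto_mul_div {ν : Measure ℝ} [IsProbabilityMeasure ν] (hrv : RegVaryingTail F α)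
    (hF : ⇑(cdf ν) = F) {k : ℕ → ℕ} (hk : Tendsto k atTop atTop)
    (hkn : Tendsto (fun n => (k n : ℝ) / n) atTop (𝓝 0)) :
    ∃ b : ℕ → ℝ, Tendsto b atTop atTop ∧
      ∀ x > 0, Tendsto (fun n => n * (1 - F (b n * x)) / k n) atTop (𝓝 (x ^ (-α))) := by
  have hT : Tendsto (fun n => (k n : ℝ) / n) atTop (𝓝[>] 0) :=
    tendsto_nhdsWithin_of_tendsto_nhds_of_eventually_within _ hkn <| by
      filter_upwards [hk.eventually_ge_atTop 1, eventually_ge_atTop 1] with n hk1 hn1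
      simp only [Set.mem_Ioi]; positivity
  obtain ⟨b, hb, hlim⟩ := hrv.exists_tendsto_div hF hT
  exact ⟨b, hb, fun x hx => (hlim x hx).congr fun n => by rw [div_div_eq_mul_div, mul_comm]⟩

end RegVaryingTail

lemma cdf_map_eq {Ω : Type*} [MeasurableSpace Ω] {μ : Measure Ω} [IsProbabilityMeasure μ]
    {Y : Ω → ℝ} {F : ℝ → ℝ} (hY : Measurable Y) (hF : ∀ x, (μ {ω | Y ω ≤ x}).toReal = F x) :
    ⇑(cdf (μ.map Y)) = F := by
  have := Measure.isProbabilityMeasure_map (μ := μ) hY.aemeasurable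
  ext x
  rw [cdf_eq_real, measureReal_def, Measure.map_apply hY measurableSet_Iic, ← hF]
  rfl

theorem truncated_count_tendstoInProb_general {Ω : Type*} [MeasurableSpace Ω]
    (μ : Measure Ω) [IsProbabilityMeasure μ]
    (X : ℕ → Ω → ℝ) (F : ℝ → ℝ) (α : ℝ) (hα : 0 < α)
    (ord : ℕ → ℕ → Ω → ℝ) (k : ℕ → ℕ) (M : ℝ) (hM : 0 < M)
    (hmeas : ∀ i, Measurable (X i))
    (hindep : iIndepFun X μ)
    (hcdf : ∀ i x, (μ {ω | X i ω ≤ x}).toReal = F x)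
    (hrv : RegVaryingTail F α)
    (hord : IsDecOrderStat X ord)
    (hk : Tendsto k atTop atTop)
    (hkn : Tendsto (fun n => (k n : ℝ) / (n : ℝ)) atTop (nhds 0)) :
    ∀ η > (0:ℝ),
      Tendsto (fun n => μ {ω | η <
        |(((Finset.Icc 1 (k n)).filter (fun j : ℕ =>
              (k n : ℝ) * Real.exp (-M) ≤ (j : ℝ) ∧
              Real.log (ord n j ω / ord n (k n) ω) ≤ 2 * M / α)).card : ℝ) / (k n : ℝ) -
          (1 - Real.exp (-M))|})
        atTop (nhds 0) := by
  intro η hη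
  have := Measure.isProbabilityMeasure_map (μ := μ) (hmeas 0).aemeasurable
  obtain ⟨b, hb, hmean⟩ := hrv.exists_tendsto_mul_div (cdf_map_eq (hmeas 0) (hcdf 0)) hk hkn
  have hkR : Tendsto (fun n => (k n : ℝ)) atTop atTop := tendsto_natCast_atTop_atTop.comp hk
  set x₁ := Real.exp (-(M / (2 * α)))
  have hx₁ : x₁ ^ (-α) = Real.exp (M / 2) := by
    rw [← Real.exp_mul]; congr 1; field_simp
  have hx₂ : (x₁ * Real.exp (2 * M / α)) ^ (-α) / Real.exp (-M) = Real.exp (-(M / 2)) := by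
    rw [← Real.exp_add, ← Real.exp_mul, ← Real.exp_sub]; congr 1; field_simp; ring
  have hlow := tendsto_measure_exceedCount_lt hmeas hindep hcdf hkR (hmean x₁ (Real.exp_pos _))
    (by rw [hx₁]; exact Real.one_lt_exp_iff.2 (by positivity))
  have hhigh := tendsto_measure_le_exceedCount hmeas hindep hcdf
    (hkR.atTop_mul_const (Real.exp_pos (-M)))
    (((hmean (x₁ * Real.exp (2 * M / α)) (by positivity)).div_const (Real.exp (-M))).congr
      fun n => by rw [div_div])
    (by rw [hx₂]; exact Real.exp_lt_one_iff.2 (by linarith))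
  have hkle : ∀ᶠ n in atTop, k n ≤ n := by
    filter_upwards [hkn.eventually_lt_const one_pos, eventually_gt_atTop 0] with n h hn
    rw [div_lt_one (by positivity)] at h
    exact_mod_cast h.le
  refine tendsto_measure_lt_abs_sub_of_tendsto_measure_ne ((tendsto_card_filter_mul_le_div
    (Real.exp_pos _) (Real.exp_le_one_iff.2 (by linarith))).comp hk) ?_ hη
  -- Off the two events of vanishing probability, `kᴹ` equals the deterministic count.
  refine tendsto_nhds_bot_mono (by simpa using hlow.add hhigh) ?_
  filter_upwards [hkle, hb.eventually_gt_atTop 0] with n hkn_le hbn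
  refine (measure_mono fun ω hω => ?_).trans (measure_union_le _ _)
  by_contra h
  simp only [Set.mem_union, Set.mem_ofPred_eq, not_or, not_lt, not_le] at h
  rw [← mul_assoc] at h
  exact hω (by
    rw [hord.card_filter_log_div_le_eq hkn_le (by positivity) (by exact_mod_cast h.1) h.2]; rfl)

/-- For iid nonnegative `X i` with regularly varying tail of index
`-α`, `k n → ∞`, `k n / n → 0`, and fixed `M > 0`, the number `kᴹ` of indices
`1 ≤ j ≤ k` with `j ≥ k e^{-M}` and `log(X_{(j)}/X_{(k)}) ≤ 2M/α` (points of the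
normalized QQ plot in `[0,M] × [0, 2M/α]`) satisfies `kᴹ/k → 1 - e^{-M}` in
probability. -/
theorem truncated_count_tendstoInProb {Ω : Type*} [MeasurableSpace Ω]
    (μ : Measure Ω) [IsProbabilityMeasure μ]
    (X : ℕ → Ω → ℝ) (F : ℝ → ℝ) (α : ℝ) (hα : 0 < α)
    (ord : ℕ → ℕ → Ω → ℝ) (k : ℕ → ℕ) (M : ℝ) (hM : 0 < M)
    (hmeas : ∀ i, Measurable (X i))
    (hindep : iIndepFun X μ)
    (hnonneg : ∀ i ω, 0 ≤ X i ω)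
    (hcdf : ∀ i x, (μ {ω | X i ω ≤ x}).toReal = F x)
    (hrv : RegVaryingTail F α)
    (hord : IsDecOrderStat X ord)
    (hk : Tendsto k atTop atTop)
    (hkn : Tendsto (fun n => (k n : ℝ) / (n : ℝ)) atTop (nhds 0)) :
    ∀ η > (0:ℝ),
      Tendsto (fun n => μ {ω | η <
        |(((Finset.Icc 1 (k n)).filter (fun j : ℕ =>
              (k n : ℝ) * Real.exp (-M) ≤ (j : ℝ) ∧
              Real.log (ord n j ω / ord n (k n) ω) ≤ 2 * M / α)).card : ℝ) / (k n : ℝ) -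
          (1 - Real.exp (-M))|})
        atTop (nhds 0) :=
  truncated_count_tendstoInProb_general μ X F α hα ord k M hM hmeas hindep hcdf hrv hord hk hkn
end
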